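/- arXiv:1609.01675 — 7 statements merged into one kernel-verified Lean document; each statement's English description precedes it below -/
import Mathlib

section
/- Assume G is a multigraph in which every pair of distinct vertices is joined by an even number of edges. Let 𝒫 be a cycle packing of G and let C_0 ∈ 𝒫. Then |𝒫| ≤ |E(G)|/2 − |E(C_0)| + f(G, 𝒫), where f(G, 𝒫) = 2 if 𝒫 is a cycle decomposition of G and f(G, 𝒫) = 1 otherwise. -/
/-- The edge list of a cycle with `m` edges traced by the vertex sequence
`v 0, v 1, …, v (m-1)` (indices modulo `m`). -/
def cycleEdgeList {V : Type*} (v : ℕ → V) (m : ℕ) : List (Sym2 V) :=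
  List.ofFn fun i : Fin m => s(v i.val, v ((i.val + 1) % m))

/-- `E` is the edge multiset of a cycle with `m` edges (vertices pairwise distinct);
a cycle of length 2 consists of two parallel edges. -/
def IsCycleM {V : Type*} (E : Multiset (Sym2 V)) (m : ℕ) : Prop :=
  2 ≤ m ∧ ∃ v : ℕ → V, Set.InjOn v (Set.Iio m) ∧ E = ↑(cycleEdgeList v m)

/-!
Digons contribute two edges and only even multiplicities, so the counting is governed by the
family `L` of the longer cycles of `𝒫`, viewed as edge sets. Let `S` be the set of edges
covered an odd number of times by `L`. Since `G` has even multiplicities, `S` is also the set of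
edges of odd multiplicity in `R = E(G) − ⋃ 𝒫`, so `|R| ≥ |S|` with equal parity, and `R = ∅`
exactly for a decomposition. Counting edges, `2|𝒫| = |E(G)| − |R| − ∑_{C ∈ L} (|C| − 2)`, and
the claim reduces to `2|C₀| − 4 − |S| + 2[S ≠ ∅] ≤ ∑_{C ∈ L} (|C| − 2)`.

Replacing two cycles of `L − C₀` that share an edge by a cycle decomposition of their symmetric
difference keeps the odd set and does not increase `∑ (|C| − 2)`. This ends with edge-disjoint
cycles partitioning `S ∆ C₀`, and each of them other than `C₀` has an edge outside `C₀`, because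
a cycle contains no other cycle.
-/

open Finset

theorem Finset.card_symmDiff_add_two_mul_card_inter {α : Type*} [DecidableEq α]
    (s t : Finset α) : #(symmDiff s t) + 2 * #(s ∩ t) = #s + #t := by
  rw [symmDiff_eq_sup_sdiff_inf, sup_eq_union, inf_eq_inter,
    card_sdiff_of_subset inter_subset_union]
  have := card_union_add_card_inter s t
  have := card_le_card (inter_subset_union (s := s) (t := t))
  omega

theorem Multiset.exists_eq_cons_cons_of_one_lt_countP {α : Type*} {p : α → Prop}
    [DecidablePred p] {s : Multiset α} (h : 1 < s.countP p) :
    ∃ a b t, p a ∧ p b ∧ s = a ::ₘ b ::ₘ t := by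
  obtain ⟨a, ha, hpa⟩ := Multiset.countP_pos.mp (by omega : 0 < s.countP p)
  obtain ⟨s', rfl⟩ := Multiset.exists_cons_of_mem ha
  rw [Multiset.countP_cons, if_pos hpa] at h
  obtain ⟨b, hb, hpb⟩ := Multiset.countP_pos.mp (by omega : 0 < s'.countP p)
  obtain ⟨t, rfl⟩ := Multiset.exists_cons_of_mem hb
  exact ⟨a, b, t, hpa, hpb, rfl⟩

open Fin.NatCast in
theorem Fin.cyclic_induction {n : ℕ} {p : Fin (n + 1) → Prop} {i₀ : Fin (n + 1)} (h₀ : p i₀)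
    (hsucc : ∀ i, p i → p (i + 1)) (j : Fin (n + 1)) : p j := by
  have key : ∀ k : ℕ, p (i₀ + (k : Fin (n + 1))) := by
    intro k
    induction k with
    | zero => simpa using h₀
    | succ k ih => simpa [add_assoc] using hsucc _ ih
  simpa using key (j - i₀).val

namespace CyclePacking

variable {V : Type*}

lemma injective_cycleEdge {n : ℕ} {w : Fin (n + 3) → V} (hw : Function.Injective w) :
    Function.Injective fun i => s(w i, w (i + 1)) := by
  intro i j hij
  rcases Sym2.eq_iff.mp hij with ⟨h, -⟩ | ⟨h₁, h₂⟩
  · exact hw h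
  · have h : i + 1 + 1 = i := by rw [hw h₂, hw h₁]
    rw [add_assoc, add_eq_left, Fin.ext_iff, Fin.val_add, Fin.val_one, Fin.val_zero,
      Nat.mod_eq_of_lt (by omega)] at h
    omega

def excess (L : Multiset (Finset (Sym2 V))) : ℤ := (L.map fun C => (#C : ℤ) - 2).sum

@[simp] lemma excess_zero : excess (0 : Multiset (Finset (Sym2 V))) = 0 := rfl

@[simp] lemma excess_add (L L' : Multiset (Finset (Sym2 V))) :
    excess (L + L') = excess L + excess L' := by
  simp [excess]

@[simp] lemma excess_cons (C : Finset (Sym2 V)) (L : Multiset (Finset (Sym2 V))) :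
    excess (C ::ₘ L) = #C - 2 + excess L := by
  simp [excess]

lemma excess_eq_sum_card_sub (L : Multiset (Finset (Sym2 V))) :
    excess L = ((L.map Finset.card).sum : ℤ) - 2 * Multiset.card L := by
  induction L using Multiset.induction with
  | empty => simp
  | cons C L ih =>
    simp only [excess_cons, ih, Multiset.map_cons, Multiset.sum_cons, Multiset.card_cons]
    push_cast
    ring

variable [DecidableEq V]

def degree (A : Finset (Sym2 V)) (x : V) : ℕ := #{e ∈ A | x ∈ e}

def IsEven (A : Finset (Sym2 V)) : Prop := ∀ x, Even (degree A x)

lemma degree_symmDiff_add_two_mul (A B : Finset (Sym2 V)) (x : V) :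
    degree (symmDiff A B) x + 2 * degree (A ∩ B) x = degree A x + degree B x := by
  have hsymm : {e ∈ symmDiff A B | x ∈ e} = symmDiff {e ∈ A | x ∈ e} {e ∈ B | x ∈ e} := by
    ext e; simp only [mem_filter, mem_symmDiff]; tauto
  rw [degree, degree, hsymm, filter_inter_distrib]
  exact card_symmDiff_add_two_mul_card_inter _ _

lemma IsEven.symmDiff {A B : Finset (Sym2 V)} (hA : IsEven A) (hB : IsEven B) :
    IsEven (symmDiff A B) := fun x => by
  have h := degree_symmDiff_add_two_mul A B x
  obtain ⟨a, ha⟩ := hA x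
  obtain ⟨b, hb⟩ := hB x
  exact ⟨a + b - degree (A ∩ B) x, by omega⟩

/-- `i + 1` wraps around in `Fin (n + 1)`: this is the edge set of the closed walk
`w 0, w 1, …, w n, w 0`. -/
def cycleEdges {n : ℕ} (w : Fin (n + 1) → V) : Finset (Sym2 V) :=
  univ.image fun i => s(w i, w (i + 1))

def IsCycleSet (C : Finset (Sym2 V)) : Prop :=
  ∃ (n : ℕ) (w : Fin (n + 3) → V), Function.Injective w ∧ C = cycleEdges w

section cycleEdges

variable {n : ℕ} {w : Fin (n + 3) → V}

lemma card_cycleEdges (hw : Function.Injective w) : #(cycleEdges w) = n + 3 := by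
  rw [cycleEdges, card_image_of_injective _ (injective_cycleEdge hw), card_univ,
    Fintype.card_fin]

lemma not_isDiag_of_mem_cycleEdges (hw : Function.Injective w) {e : Sym2 V}
    (he : e ∈ cycleEdges w) : ¬ e.IsDiag := by
  obtain ⟨i, -, rfl⟩ := mem_image.mp he
  rw [Sym2.mk_isDiag_iff]
  intro h
  simpa using hw h

lemma filter_mem_cycleEdges (hw : Function.Injective w) (j : Fin (n + 3)) :
    {e ∈ cycleEdges w | w j ∈ e} = {s(w (j - 1), w j), s(w j, w (j + 1))} := by
  ext e
  simp only [cycleEdges, mem_filter, mem_image, mem_univ, true_and, mem_insert, mem_singleton]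
  constructor
  · rintro ⟨⟨i, rfl⟩, hj⟩
    rcases Sym2.mem_iff.mp hj with h | h
    · right; rw [hw h]
    · left; rw [hw h, add_sub_cancel_right]
  · rintro (rfl | rfl)
    · exact ⟨⟨j - 1, by rw [sub_add_cancel]⟩, Sym2.mem_mk_right _ _⟩
    · exact ⟨⟨j, rfl⟩, Sym2.mem_mk_left _ _⟩

lemma degree_cycleEdges_apply (hw : Function.Injective w) (j : Fin (n + 3)) :
    degree (cycleEdges w) (w j) = 2 := by
  rw [degree, filter_mem_cycleEdges hw, card_pair]
  intro h
  have := injective_cycleEdge hw (a₁ := j - 1) (a₂ := j) (by simpa using h)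
  simp at this

lemma degree_cycleEdges_of_notMem_range {x : V} (hx : x ∉ Set.range w) :
    degree (cycleEdges w) x = 0 := by
  rw [degree, card_eq_zero, filter_eq_empty_iff]
  intro e he hxe
  obtain ⟨i, -, rfl⟩ := mem_image.mp he
  rcases Sym2.mem_iff.mp hxe with rfl | rfl <;> exact hx ⟨_, rfl⟩

end cycleEdges

namespace IsCycleSet

variable {C : Finset (Sym2 V)}

lemma three_le_card (hC : IsCycleSet C) : 3 ≤ #C := by
  obtain ⟨n, w, hw, rfl⟩ := hC
  rw [card_cycleEdges hw]
  omega

lemma not_isDiag (hC : IsCycleSet C) {e : Sym2 V} (he : e ∈ C) : ¬ e.IsDiag := by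
  obtain ⟨n, w, hw, rfl⟩ := hC
  exact not_isDiag_of_mem_cycleEdges hw he

lemma isEven (hC : IsCycleSet C) : IsEven C := by
  obtain ⟨n, w, hw, rfl⟩ := hC
  intro x
  by_cases hx : x ∈ Set.range w
  · obtain ⟨j, rfl⟩ := hx
    rw [degree_cycleEdges_apply hw]
    exact even_two
  · rw [degree_cycleEdges_of_notMem_range hx]
    exact ⟨0, rfl⟩

/-- At each vertex of the cycle an even subset `D` has degree `0` or `2`, so once `D` contains
the edge entering a vertex it also contains the edge leaving it. -/
lemma eq_of_subset (hC : IsCycleSet C) {D : Finset (Sym2 V)} (hD : IsEven D)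
    (hne : D.Nonempty) (hDC : D ⊆ C) : D = C := by
  obtain ⟨n, w, hw, rfl⟩ := hC
  refine hDC.antisymm fun e he => ?_
  obtain ⟨e₀, he₀⟩ := hne
  obtain ⟨i₀, -, rfl⟩ := mem_image.mp (hDC he₀)
  have hstep : ∀ i, s(w i, w (i + 1)) ∈ D → s(w (i + 1), w (i + 1 + 1)) ∈ D := by
    intro i hi
    have hsub : {e ∈ D | w (i + 1) ∈ e} ⊆ {e ∈ cycleEdges w | w (i + 1) ∈ e} :=
      filter_subset_filter _ hDC
    have hpos : 0 < degree D (w (i + 1)) :=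
      card_pos.mpr ⟨_, mem_filter.mpr ⟨hi, Sym2.mem_mk_right _ _⟩⟩
    have htwo : 2 ≤ degree D (w (i + 1)) := by
      obtain ⟨k, hk⟩ := hD (w (i + 1)); omega
    have heq := eq_of_subset_of_card_le hsub (by
      rw [← degree, ← degree, degree_cycleEdges_apply hw]; exact htwo)
    have : s(w (i + 1), w (i + 1 + 1)) ∈ {e ∈ cycleEdges w | w (i + 1) ∈ e} := by
      rw [filter_mem_cycleEdges hw]; simp
    rw [← heq] at this
    exact (mem_filter.mp this).1
  obtain ⟨i, -, rfl⟩ := mem_image.mp he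
  exact Fin.cyclic_induction (p := fun i => s(w i, w (i + 1)) ∈ D) he₀ hstep i

lemma sdiff_nonempty_of_ne (hC : IsCycleSet C) {C₀ : Finset (Sym2 V)} (hC₀ : IsCycleSet C₀)
    (hne : C ≠ C₀) : (C \ C₀).Nonempty := by
  rw [Finset.sdiff_nonempty]
  intro hsub
  exact hne (hC₀.eq_of_subset hC.isEven (card_pos.mp (by have := hC.three_le_card; omega)) hsub)

end IsCycleSet

lemma card_le_excess {L : Multiset (Finset (Sym2 V))} (hL : ∀ C ∈ L, IsCycleSet C) :
    (Multiset.card L : ℤ) ≤ excess L := by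
  induction L using Multiset.induction with
  | empty => simp
  | cons C L ih =>
    rw [Multiset.forall_mem_cons] at hL
    have := hL.1.three_le_card
    rw [excess_cons, Multiset.card_cons]
    push_cast
    linarith [ih hL.2]

def IsCycleDecomposition (D : Multiset (Finset (Sym2 V))) (S : Finset (Sym2 V)) : Prop :=
  (∀ C ∈ D, IsCycleSet C) ∧ ∀ e, D.countP (e ∈ ·) = if e ∈ S then 1 else 0

lemma IsCycleDecomposition.countP_le_one {D : Multiset (Finset (Sym2 V))}
    {S : Finset (Sym2 V)} (hD : IsCycleDecomposition D S) (e : Sym2 V) :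
    D.countP (e ∈ ·) ≤ 1 := by
  rw [hD.2 e]
  split_ifs <;> simp

section Paths

variable {T : Finset (Sym2 V)}

lemma exists_adj_ne (hloop : ∀ e ∈ T, ¬ e.IsDiag) (hT : IsEven T) {x y : V}
    (hxy : s(x, y) ∈ T) : ∃ z, s(x, z) ∈ T ∧ z ≠ x ∧ z ≠ y := by
  have hmem : s(x, y) ∈ {e ∈ T | x ∈ e} := mem_filter.mpr ⟨hxy, Sym2.mem_mk_left _ _⟩
  have htwo : 1 < degree T x := by
    have : 0 < degree T x := card_pos.mpr ⟨_, hmem⟩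
    obtain ⟨k, hk⟩ := hT x
    omega
  obtain ⟨e, he, hne⟩ := exists_mem_ne htwo s(x, y)
  obtain ⟨heT, hxe⟩ := mem_filter.mp he
  obtain ⟨z, rfl⟩ := Sym2.mem_iff_exists.mp hxe
  exact ⟨z, heT, fun h => hloop _ heT (by rw [h, Sym2.mk_isDiag_iff]), fun h => hne (by rw [h])⟩

lemma exists_isCycleSet_of_path {u : List V} (hu : u.Nodup)
    (hpath : u.IsChain fun a b => s(a, b) ∈ T) {j : ℕ} (h2j : 2 ≤ j) (hj : j < u.length)
    (hclose : s(u[j], u[0]) ∈ T) : ∃ C, IsCycleSet C ∧ C ⊆ T := by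
  obtain ⟨n, rfl⟩ : ∃ n, j = n + 2 := ⟨j - 2, by omega⟩
  refine ⟨cycleEdges fun i : Fin (n + 3) => u[i.val], ⟨n, _, fun i i' h => ?_, rfl⟩, ?_⟩
  · exact Fin.ext ((hu.getElem_inj_iff).mp h)
  · intro e he
    obtain ⟨i, -, rfl⟩ := mem_image.mp he
    dsimp only
    by_cases hi : i = Fin.last (n + 2)
    · subst hi
      simpa only [Fin.last_add_one, Fin.val_last, Fin.val_zero] using hclose
    · have hlt := Fin.val_lt_last hi
      simp only [Fin.val_add_one_of_lt (Fin.lt_last_iff_ne_last.mpr hi)]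
      exact List.isChain_iff_getElem.mp hpath i (by omega)

lemma exists_isCycleSet_of_mem_path {x y z : V} {rest : List V}
    (hu : (x :: y :: rest).Nodup) (hpath : (x :: y :: rest).IsChain fun a b => s(a, b) ∈ T)
    (hxz : s(x, z) ∈ T) (hzx : z ≠ x) (hzy : z ≠ y) (hz : z ∈ x :: y :: rest) :
    ∃ C, IsCycleSet C ∧ C ⊆ T := by
  obtain ⟨j, hj, rfl⟩ := List.getElem_of_mem hz
  have h0 : j ≠ 0 := by rintro rfl; exact hzx rfl
  have h1 : j ≠ 1 := by rintro rfl; exact hzy rfl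
  exact exists_isCycleSet_of_path hu hpath (by omega) hj (by rw [Sym2.eq_swap]; exact hxz)

/-- The first vertex has a second neighbour, which either closes a cycle or extends the path;
the path cannot outgrow `V`. -/
theorem exists_isCycleSet_of_path_cons [Fintype V] (hloop : ∀ e ∈ T, ¬ e.IsDiag)
    (hT : IsEven T) (x y : V) (rest : List V) (hu : (x :: y :: rest).Nodup)
    (hpath : (x :: y :: rest).IsChain fun a b => s(a, b) ∈ T) : ∃ C, IsCycleSet C ∧ C ⊆ T := by
  obtain ⟨z, hxz, hzx, hzy⟩ := exists_adj_ne hloop hT (List.isChain_cons_cons.mp hpath).1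
  by_cases hz : z ∈ x :: y :: rest
  · exact exists_isCycleSet_of_mem_path hu hpath hxz hzx hzy hz
  · have hu' : (z :: x :: y :: rest).Nodup := List.nodup_cons.mpr ⟨hz, hu⟩
    exact exists_isCycleSet_of_path_cons hloop hT z x (y :: rest) hu'
      (List.isChain_cons_cons.mpr ⟨by rw [Sym2.eq_swap]; exact hxz, hpath⟩)
termination_by Fintype.card V - rest.length
decreasing_by
  have := hu'.length_le_card
  simp only [List.length_cons] at this ⊢
  omega

end Paths

section Decomposition

variable [Fintype V]

lemma exists_isCycleSet_subset {T : Finset (Sym2 V)} (hloop : ∀ e ∈ T, ¬ e.IsDiag)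
    (hT : IsEven T) (hne : T.Nonempty) : ∃ C, IsCycleSet C ∧ C ⊆ T := by
  obtain ⟨e, he⟩ := hne
  induction e using Sym2.ind with
  | _ x y =>
  have hxy : x ≠ y := fun h => hloop _ he (Sym2.mk_isDiag_iff.mpr h)
  exact exists_isCycleSet_of_path_cons hloop hT x y [] (by simp [hxy]) (List.isChain_pair.mpr he)

lemma exists_isCycleDecomposition {T : Finset (Sym2 V)} (hloop : ∀ e ∈ T, ¬ e.IsDiag)
    (hT : IsEven T) : ∃ D, IsCycleDecomposition D T := by
  induction hn : #T using Nat.strong_induction_on generalizing T with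
  | _ n ih =>
  rcases T.eq_empty_or_nonempty with rfl | hne
  · exact ⟨0, by simp, by simp⟩
  obtain ⟨C, hC, hCT⟩ := exists_isCycleSet_subset hloop hT hne
  have hsdiff : T \ C = symmDiff T C := by rw [symmDiff_comm, symmDiff_of_le hCT]
  have hlt : #(T \ C) < n := by
    rw [← hn, card_sdiff_of_subset hCT]
    have := hC.three_le_card
    have := card_le_card hCT
    omega
  obtain ⟨D, hD, hDcount⟩ := ih _ hlt (fun e he => hloop e (mem_sdiff.mp he).1)
    (hsdiff ▸ hT.symmDiff hC.isEven) rfl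
  refine ⟨C ::ₘ D, Multiset.forall_mem_cons.mpr ⟨hC, hD⟩, fun e => ?_⟩
  rw [Multiset.countP_cons, hDcount]
  by_cases heC : e ∈ C
  · simp [heC, hCT heC]
  · by_cases heT : e ∈ T <;> simp [heC, heT]

lemma sum_card_filter_eq_sum_countP (L : Multiset (Finset (Sym2 V))) (p : Sym2 V → Prop)
    [DecidablePred p] :
    (L.map fun C => #{e ∈ C | p e}).sum = ∑ e with p e, L.countP (e ∈ ·) := by
  induction L using Multiset.induction with
  | empty => simp
  | cons C L ih =>
    have hC : #{e ∈ C | p e} = ∑ e with p e, if e ∈ C then 1 else 0 := by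
      rw [sum_boole, Nat.cast_id, filter_filter]
      congr 1
      ext e
      simp only [mem_filter, mem_univ, true_and]
      tauto
    rw [Multiset.map_cons, Multiset.sum_cons, ih, hC, ← sum_add_distrib]
    exact sum_congr rfl fun e _ => by rw [Multiset.countP_cons, add_comm]

namespace IsCycleDecomposition

variable {D : Multiset (Finset (Sym2 V))} {S : Finset (Sym2 V)}

lemma sum_card_filter (hD : IsCycleDecomposition D S) (p : Sym2 V → Prop) [DecidablePred p] :
    (D.map fun C => #{e ∈ C | p e}).sum = #{e ∈ S | p e} := by
  rw [sum_card_filter_eq_sum_countP, sum_congr rfl fun e _ => hD.2 e, sum_boole, Nat.cast_id,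
    filter_filter]
  congr 1
  ext e
  simp only [mem_filter, mem_univ, true_and]
  tauto

lemma sum_card (hD : IsCycleDecomposition D S) : (D.map Finset.card).sum = #S := by
  simpa only [filter_true] using hD.sum_card_filter fun _ => True

lemma excess_eq (hD : IsCycleDecomposition D S) : excess D = #S - 2 * Multiset.card D := by
  rw [excess_eq_sum_card_sub, hD.sum_card]

end IsCycleDecomposition

lemma exists_isCycleDecomposition_symmDiff {C₁ C₂ : Finset (Sym2 V)} (hC₁ : IsCycleSet C₁)
    (hC₂ : IsCycleSet C₂) (hinter : (C₁ ∩ C₂).Nonempty) :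
    ∃ M, IsCycleDecomposition M (symmDiff C₁ C₂) ∧
      (M.map Finset.card).sum < #C₁ + #C₂ ∧ excess M ≤ #C₁ - 2 + (#C₂ - 2) := by
  obtain ⟨M, hM⟩ := exists_isCycleDecomposition (T := symmDiff C₁ C₂)
    (fun e he => (mem_symmDiff.mp he).elim (hC₁.not_isDiag ·.1) (hC₂.not_isDiag ·.1))
    (hC₁.isEven.symmDiff hC₂.isEven)
  have hT := card_symmDiff_add_two_mul_card_inter C₁ C₂
  have hpos := card_pos.mpr hinter
  have hsum := hM.sum_card
  refine ⟨M, hM, by omega, ?_⟩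
  rw [hM.excess_eq]
  have := hC₁.three_le_card
  have := hC₂.three_le_card
  rcases M.empty_or_exists_mem with rfl | ⟨C, hC⟩
  · simp only [Multiset.map_zero, Multiset.sum_zero] at hsum
    omega
  · have := Multiset.card_pos_iff_exists_mem.mpr ⟨C, hC⟩
    omega

def oddSet (L : Multiset (Finset (Sym2 V))) : Finset (Sym2 V) := {e | Odd (L.countP (e ∈ ·))}

@[simp] lemma mem_oddSet {L : Multiset (Finset (Sym2 V))} {e : Sym2 V} :
    e ∈ oddSet L ↔ Odd (L.countP (e ∈ ·)) := by
  simp [oddSet]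

@[simp] lemma oddSet_zero : oddSet (0 : Multiset (Finset (Sym2 V))) = ∅ := by
  ext; simp

lemma oddSet_add (L L' : Multiset (Finset (Sym2 V))) :
    oddSet (L + L') = symmDiff (oddSet L) (oddSet L') := by
  ext e
  simp only [mem_oddSet, Multiset.countP_add, Nat.odd_add, mem_symmDiff, ← Nat.not_odd_iff_even]
  tauto

lemma oddSet_cons (C : Finset (Sym2 V)) (L : Multiset (Finset (Sym2 V))) :
    oddSet (C ::ₘ L) = symmDiff C (oddSet L) := by
  have : oddSet {C} = C := by
    ext e; by_cases he : e ∈ C <;> simp [← Multiset.cons_zero, he]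
  rw [← Multiset.singleton_add, oddSet_add, this]

lemma IsCycleDecomposition.oddSet_eq {D : Multiset (Finset (Sym2 V))} {S : Finset (Sym2 V)}
    (hD : IsCycleDecomposition D S) : oddSet D = S := by
  ext e
  rw [mem_oddSet, hD.2 e]
  split_ifs with he <;> simp [he]

lemma isCycleDecomposition_oddSet_of_countP_le_one {L : Multiset (Finset (Sym2 V))}
    (hL : ∀ C ∈ L, IsCycleSet C) (hdisj : ∀ e, L.countP (e ∈ ·) ≤ 1) :
    IsCycleDecomposition L (oddSet L) := by
  refine ⟨hL, fun e => ?_⟩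
  rcases Nat.le_one_iff_eq_zero_or_eq_one.mp (hdisj e) with h | h <;> simp [h]

theorem exists_isCycleDecomposition_oddSet {L : Multiset (Finset (Sym2 V))}
    (hL : ∀ C ∈ L, IsCycleSet C) :
    ∃ D, IsCycleDecomposition D (oddSet L) ∧ excess D ≤ excess L := by
  induction hn : (L.map Finset.card).sum using Nat.strong_induction_on generalizing L with
  | _ n ih =>
  by_cases hdisj : ∀ e, L.countP (e ∈ ·) ≤ 1
  · exact ⟨L, isCycleDecomposition_oddSet_of_countP_le_one hL hdisj, le_rfl⟩
  push Not at hdisj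
  obtain ⟨e, he⟩ := hdisj
  obtain ⟨C₁, C₂, L₂, he₁, he₂, rfl⟩ := Multiset.exists_eq_cons_cons_of_one_lt_countP he
  simp only [Multiset.forall_mem_cons] at hL
  obtain ⟨hC₁, hC₂, hL₂⟩ := hL
  obtain ⟨M, hM, hMsum, hMexcess⟩ :=
    exists_isCycleDecomposition_symmDiff hC₁ hC₂ ⟨e, mem_inter.mpr ⟨he₁, he₂⟩⟩
  have hlt : ((M + L₂).map Finset.card).sum < n := by
    rw [← hn, Multiset.map_add, Multiset.sum_add]
    simp only [Multiset.map_cons, Multiset.sum_cons]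
    omega
  obtain ⟨D, hD, hDexcess⟩ :=
    ih _ hlt (fun C hC => (Multiset.mem_add.mp hC).elim (hM.1 C) (hL₂ C)) rfl
  have hodd : oddSet (M + L₂) = oddSet (C₁ ::ₘ C₂ ::ₘ L₂) := by
    rw [oddSet_add, hM.oddSet_eq, oddSet_cons, oddSet_cons, symmDiff_assoc]
  refine ⟨D, hodd ▸ hD, hDexcess.trans ?_⟩
  simp only [excess_add, excess_cons]
  linarith

/-- A cycle of `D` other than `C₀` has an edge outside `C₀`; if `C₀ ∈ D`, the other cycles lie
entirely outside `C₀`. -/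
lemma IsCycleDecomposition.card_le {D : Multiset (Finset (Sym2 V))} {S C₀ : Finset (Sym2 V)}
    (hD : IsCycleDecomposition D S) (hC₀ : IsCycleSet C₀) :
    Multiset.card D ≤ #(S \ C₀) + if S = C₀ then 1 else 0 := by
  have hsum := hD.sum_card_filter (· ∉ C₀)
  simp only [filter_notMem_eq_sdiff] at hsum
  by_cases hC₀D : C₀ ∈ D
  · obtain ⟨D', rfl⟩ := Multiset.exists_cons_of_mem hC₀D
    have hdisj : ∀ C ∈ D', C \ C₀ = C := by
      refine fun C hC => sdiff_eq_self_of_disjoint (disjoint_left.mpr fun e he he₀ => ?_)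
      have hcount := hD.countP_le_one e
      have := (Multiset.countP_pos (p := (e ∈ ·))).mpr ⟨C, hC, he⟩
      rw [Multiset.countP_cons, if_pos he₀] at hcount
      omega
    have h3 := Multiset.card_nsmul_le_sum (s := D'.map Finset.card) (a := 3) (by
      simpa using fun C hC => (hD.1 C (Multiset.mem_cons_of_mem hC)).three_le_card)
    rw [Multiset.map_cons, Multiset.sum_cons, Multiset.map_congr rfl fun C hC => by
      rw [hdisj C hC], sdiff_self, bot_eq_empty, card_empty, zero_add] at hsum
    simp only [Multiset.card_map, smul_eq_mul] at h3
    rcases D'.empty_or_exists_mem with rfl | ⟨C, hC⟩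
    · have hS : S = C₀ := by
        rw [← hD.oddSet_eq, oddSet_cons, oddSet_zero, ← bot_eq_empty, symmDiff_bot]
      simp [hS]
    · have := Multiset.card_pos_iff_exists_mem.mpr ⟨C, hC⟩
      rw [Multiset.card_cons]
      omega
  · have := Multiset.card_nsmul_le_sum (s := D.map fun C => #(C \ C₀)) (a := 1) (by
      simpa [Nat.one_le_iff_ne_zero] using fun C hC => (card_pos.mpr
        ((hD.1 C hC).sdiff_nonempty_of_ne hC₀ fun h => hC₀D (h ▸ hC))).ne')
    simp only [Multiset.card_map, smul_eq_mul, mul_one] at this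
    omega

theorem le_excess_of_mem {L : Multiset (Finset (Sym2 V))} (hL : ∀ C ∈ L, IsCycleSet C)
    {C₀ : Finset (Sym2 V)} (hC₀ : C₀ ∈ L) :
    2 * #C₀ - 4 - #(oddSet L) + (if oddSet L = ∅ then 0 else 2) ≤ excess L := by
  obtain ⟨L', rfl⟩ := Multiset.exists_cons_of_mem hC₀
  rw [Multiset.forall_mem_cons] at hL
  obtain ⟨D, hD, hDexcess⟩ := exists_isCycleDecomposition_oddSet hL.2
  have hcard := hD.card_le hL.1
  have hDex := hD.excess_eq
  have hsymm := card_symmDiff_add_two_mul_card_inter C₀ (oddSet L')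
  have hsplit := card_inter_add_card_sdiff (oddSet L') C₀
  have hempty : symmDiff C₀ (oddSet L') = ∅ ↔ oddSet L' = C₀ := by
    rw [← bot_eq_empty, symmDiff_eq_bot, eq_comm]
  rw [inter_comm] at hsymm
  rw [oddSet_cons, excess_cons]
  by_cases h : oddSet L' = C₀
  · rw [if_pos (hempty.mpr h)]
    rw [if_pos h] at hcard
    omega
  · rw [if_neg (mt hempty.mp h)]
    rw [if_neg h] at hcard
    omega

end Decomposition

end CyclePacking

open CyclePacking

namespace IsCycleM

variable {V : Type*} {E : Multiset (Sym2 V)} {m : ℕ}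

lemma card_eq (h : IsCycleM E m) : Multiset.card E = m := by
  obtain ⟨-, v, -, rfl⟩ := h
  simp [cycleEdgeList]

variable [DecidableEq V]

lemma nodup_and_isCycleSet (h : IsCycleM E m) (hm : 3 ≤ m) :
    E.Nodup ∧ IsCycleSet E.toFinset := by
  obtain ⟨-, v, hv, rfl⟩ := h
  obtain ⟨n, rfl⟩ : ∃ n, m = n + 3 := ⟨m - 3, by omega⟩
  have hw : Function.Injective fun i : Fin (n + 3) => v i :=
    fun i j hij => Fin.ext (hv i.isLt j.isLt hij)
  have hlist : cycleEdgeList v (n + 3) =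
      List.ofFn fun i : Fin (n + 3) => s(v i, v ↑(i + 1)) := by
    simp [cycleEdgeList, Fin.val_add]
  rw [hlist]
  refine ⟨Multiset.coe_nodup.mpr (List.nodup_ofFn.mpr (injective_cycleEdge hw)), n, _, hw, ?_⟩
  ext e
  simp only [Multiset.mem_toFinset, Multiset.mem_coe, List.mem_ofFn, cycleEdges, mem_image,
    mem_univ, true_and]

lemma even_count (h : IsCycleM E 2) (e : Sym2 V) : Even (E.count e) := by
  obtain ⟨-, v, -, rfl⟩ := h
  have : cycleEdgeList v 2 = [s(v 0, v 1), s(v 0, v 1)] := by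
    simp [cycleEdgeList, List.ofFn_succ, Sym2.eq_swap]
  rw [this]
  by_cases he : s(v 0, v 1) = e <;> simp [he]

end IsCycleM

namespace CyclePacking

variable {V : Type*} [DecidableEq V]

/-- Digons are left out: their edges form a multiset rather than a set, and they cover every
edge an even number of times. -/
def longCycles (P : Multiset (Multiset (Sym2 V))) : Multiset (Finset (Sym2 V)) :=
  (P.filter fun C => 3 ≤ Multiset.card C).map Multiset.toFinset

lemma longCycles_cons (C : Multiset (Sym2 V)) (P : Multiset (Multiset (Sym2 V))) :
    longCycles (C ::ₘ P) =
      if 3 ≤ Multiset.card C then C.toFinset ::ₘ longCycles P else longCycles P := by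
  unfold longCycles
  split_ifs with h <;> simp [h]

section OddEdges

variable [Fintype V]

def oddEdges (X : Multiset (Sym2 V)) : Finset (Sym2 V) := {e | Odd (X.count e)}

@[simp] lemma mem_oddEdges {X : Multiset (Sym2 V)} {e : Sym2 V} :
    e ∈ oddEdges X ↔ Odd (X.count e) := by
  simp [oddEdges]

lemma exists_card_eq_card_oddEdges_add (X : Multiset (Sym2 V)) :
    ∃ t, Multiset.card X = #(oddEdges X) + 2 * t := by
  refine ⟨∑ e, X.count e / 2, ?_⟩
  have hcard : Multiset.card X = ∑ e, X.count e := by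
    rw [← Multiset.toFinset_sum_count_eq]
    exact sum_subset (subset_univ _) fun e _ he => Multiset.count_eq_zero.mpr (by simpa using he)
  have hodd : #(oddEdges X) = ∑ e, X.count e % 2 := by
    rw [oddEdges, card_filter]
    exact sum_congr rfl fun e _ => by split_ifs with h <;> simp_all [Nat.odd_iff]
  rw [hcard, hodd, mul_sum, ← sum_add_distrib]
  exact sum_congr rfl fun e _ => (Nat.mod_add_div _ _).symm

lemma oddEdges_sub {X Y : Multiset (Sym2 V)} (hYX : Y ≤ X) (hX : ∀ e, Even (X.count e)) :
    oddEdges (X - Y) = oddEdges Y := by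
  ext e
  rw [mem_oddEdges, mem_oddEdges, Multiset.count_sub,
    Nat.odd_sub (Multiset.le_iff_count.mp hYX e), ← Nat.not_odd_iff_even]
  have := hX e
  rw [← Nat.not_odd_iff_even] at this
  tauto

end OddEdges

section Packing

variable {P : Multiset (Multiset (Sym2 V))} (hP : ∀ C ∈ P, ∃ m, IsCycleM C m)
include hP

lemma isCycleSet_of_mem_longCycles {C : Finset (Sym2 V)} (hC : C ∈ longCycles P) :
    IsCycleSet C := by
  obtain ⟨C', hC', rfl⟩ := Multiset.mem_map.mp hC
  obtain ⟨hC'P, h3⟩ := Multiset.mem_filter.mp hC'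
  obtain ⟨m, hm⟩ := hP C' hC'P
  exact (hm.nodup_and_isCycleSet (hm.card_eq ▸ h3)).2

lemma two_mul_card_eq_card_sum_sub_excess :
    (2 * Multiset.card P : ℤ) = Multiset.card P.sum - excess (longCycles P) := by
  induction P using Multiset.induction with
  | empty => simp [longCycles]
  | cons C P ih =>
    rw [Multiset.forall_mem_cons] at hP
    obtain ⟨⟨m, hm⟩, hP⟩ := hP
    have hcard := hm.card_eq
    rw [longCycles_cons, Multiset.sum_cons, Multiset.card_add, Multiset.card_cons]
    split_ifs with h3
    · rw [excess_cons, Multiset.toFinset_card_of_nodup (hm.nodup_and_isCycleSet (by omega)).1]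
      push_cast
      linarith [ih hP]
    · have := hm.1
      push_cast
      linarith [ih hP]

variable [Fintype V]

lemma oddSet_longCycles : oddSet (longCycles P) = oddEdges P.sum := by
  induction P using Multiset.induction with
  | empty => ext; simp [longCycles]
  | cons C P ih =>
    rw [Multiset.forall_mem_cons] at hP
    obtain ⟨⟨m, hm⟩, hP⟩ := hP
    ext e
    have ih := (Finset.ext_iff.mp (ih hP) e).trans mem_oddEdges
    rw [longCycles_cons, Multiset.sum_cons, mem_oddEdges, Multiset.count_add, Nat.odd_add,
      ← Nat.not_odd_iff_even, ← ih]
    split_ifs with h3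
    · rw [oddSet_cons, mem_symmDiff, Multiset.mem_toFinset,
        Multiset.count_eq_of_nodup (hm.nodup_and_isCycleSet (hm.card_eq ▸ h3)).1]
      by_cases he : e ∈ C <;> simp [he]
    · have h2 : m = 2 := by have := hm.1; have := hm.card_eq; omega
      have := (h2 ▸ hm).even_count e
      rw [← Nat.not_odd_iff_even] at this
      tauto

lemma le_excess_longCycles {C₀ : Multiset (Sym2 V)} (hC₀ : C₀ ∈ P) :
    2 * Multiset.card C₀ - 4 - #(oddSet (longCycles P)) +
      (if oddSet (longCycles P) = ∅ then 0 else 2) ≤ excess (longCycles P) := by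
  obtain ⟨m, hm⟩ := hP C₀ hC₀
  by_cases h3 : 3 ≤ Multiset.card C₀
  · have hmem : C₀.toFinset ∈ longCycles P :=
      Multiset.mem_map_of_mem _ (Multiset.mem_filter.mpr ⟨hC₀, h3⟩)
    have := le_excess_of_mem (fun C hC => isCycleSet_of_mem_longCycles hP hC) hmem
    rwa [Multiset.toFinset_card_of_nodup (hm.nodup_and_isCycleSet (hm.card_eq ▸ h3)).1] at this
  · have h2 : Multiset.card C₀ = 2 := by have := hm.1; have := hm.card_eq; omega
    have hcard := card_le_excess fun C hC => isCycleSet_of_mem_longCycles hP hC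
    split_ifs with hS
    · omega
    · have hne : longCycles P ≠ 0 := fun h => hS (by rw [h, oddSet_zero])
      have := Multiset.card_pos.mpr hne
      have := card_pos.mpr (nonempty_iff_ne_empty.mpr hS)
      omega

end Packing

end CyclePacking

theorem cycle_packing_card_bound_general {V : Type*} [Fintype V] [DecidableEq V]
    (G : Multiset (Sym2 V))
    (heven : ∀ e : Sym2 V, Even (G.count e))
    (P : Multiset (Multiset (Sym2 V)))
    (hcyc : ∀ C ∈ P, ∃ m, IsCycleM C m)
    (hpack : P.sum ≤ G)
    (C₀ : Multiset (Sym2 V)) (hC₀ : C₀ ∈ P) :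
    (Multiset.card P : ℤ) ≤ (Multiset.card G : ℤ) / 2 - Multiset.card C₀ +
      (if P.sum = G then 2 else 1) := by
  obtain ⟨r, hr⟩ := exists_card_eq_card_oddEdges_add (G - P.sum)
  rw [oddEdges_sub hpack heven, ← oddSet_longCycles hcyc] at hr
  obtain ⟨g, hg⟩ := exists_card_eq_card_oddEdges_add G
  rw [show oddEdges G = ∅ by ext e; simp [← Nat.not_even_iff_odd, heven], card_empty] at hg
  have hrest : Multiset.card (G - P.sum) = Multiset.card G - Multiset.card P.sum :=
    Multiset.card_sub hpack
  have hle := Multiset.card_le_card hpack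
  have hdecomp : P.sum = G ↔ Multiset.card (G - P.sum) = 0 := by
    rw [Multiset.card_eq_zero, tsub_eq_zero_iff_le]
    exact ⟨fun h => h.ge, hpack.antisymm⟩
  have hcard := two_mul_card_eq_card_sum_sub_excess hcyc
  have hkey := le_excess_longCycles hcyc hC₀
  rcases (oddSet (longCycles P)).eq_empty_or_nonempty with hS | hS
  · simp only [hS, card_empty, if_true] at hkey hr
    split_ifs with h
    · have := hdecomp.mp h; omega
    · have := mt hdecomp.mpr h; omega
  · rw [if_neg hS.ne_empty] at hkey
    have := card_pos.mpr hS
    split_ifs with h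
    · have := hdecomp.mp h; omega
    · omega

/-- **Lemma 6 of the paper.**  Let `G` be a multigraph (edge multiset on vertex set `V`)
in which every pair of distinct vertices is joined by an even number of edges.  Let `P`
be a cycle packing of `G` and `C₀ ∈ P`.  Then
`|P| ≤ |E(G)|/2 − |E(C₀)| + f(G,P)`, where `f(G,P) = 2` if `P` is a decomposition of `G`
and `f(G,P) = 1` otherwise. -/
theorem cycle_packing_card_bound {V : Type*} [Fintype V] [DecidableEq V]
    (G : Multiset (Sym2 V)) (hloop : ∀ e ∈ G, ¬ e.IsDiag)
    (heven : ∀ e : Sym2 V, Even (G.count e))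
    (P : Multiset (Multiset (Sym2 V)))
    (hcyc : ∀ C ∈ P, ∃ m, IsCycleM C m)
    (hpack : P.sum ≤ G)
    (C₀ : Multiset (Sym2 V)) (hC₀ : C₀ ∈ P) :
    (Multiset.card P : ℤ) ≤ (Multiset.card G : ℤ) / 2 - Multiset.card C₀ +
      (if P.sum = G then 2 else 1) :=
  cycle_packing_card_bound_general G heven P hcyc hpack C₀ hC₀
end

section
/- Let k, n be natural numbers with 3 ≤ k ≤ n and let S ⊆ [n]^{(k)} be nonempty. Define the real number s ≥ k by |S| = C(s, k) (generalized binomial coefficient s(s−1)⋯(s−k+1)/k!). Then |δ_{k−2}^-(S)| ≥ C(s, 2) = s(s−1)/2. -/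
/-!
This is Lovász's form of the Kruskal–Katona theorem, `C(x, k + 1) ≤ |F| → C(x, k) ≤ |∂ F|` for a
family `F` of `(k + 1)`-sets and real `x ≥ k + 1`, applied `k - 2` times. It is proved by Frankl's
argument. UV-compressions along pairs `i < j` preserve `|F|` and do not increase `|∂ F|`, so `F`
may be assumed shifted. Let `e` be the least element, `F₁` the link of `e` and `F₀` the sets
avoiding `e`. Then `|∂ F| ≥ |F₁| + |∂ F₁|`, and shiftedness gives `∂ F₀ ⊆ F₁`. If
`|F₁| ≥ C(x - 1, k)`, induction on `k` and Pascal's rule finish; otherwise `|F₀| > C(x - 1, k + 1)`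
and induction on `|F|` applied to `F₀` yields `|F₁| ≥ |∂ F₀| ≥ C(x - 1, k)`, a contradiction.
-/

open scoped BigOperators

/-- The set of all `r`-subsets of `Fin n` contained in some member of `S`
(for `S ⊆ [n]^{(k)}` and `r = k − ℓ`, this is the `ℓ`-th lower shadow `δ_ℓ^-(S)`). -/
def lowerShadow (n r : ℕ) (S : Finset (Finset (Fin n))) : Finset (Finset (Fin n)) :=
  Finset.univ.filter fun t => t.card = r ∧ ∃ A ∈ S, t ⊆ A

/-- The generalized binomial coefficient `C(s, k) = s(s−1)⋯(s−k+1)/k!` for real `s`. -/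
noncomputable def genBinom (s : ℝ) (k : ℕ) : ℝ :=
  (∏ i ∈ Finset.range k, (s - i)) / (Nat.factorial k)

open Finset
open scoped FinsetFamily

@[simp]
lemma genBinom_zero_right (s : ℝ) : genBinom s 0 = 1 := by simp [genBinom]

lemma genBinom_succ_right (s : ℝ) (k : ℕ) :
    genBinom s (k + 1) = genBinom s k * (s - k) / (k + 1) := by
  rw [genBinom, genBinom, prod_range_succ, Nat.factorial_succ]
  push_cast
  field_simp

lemma genBinom_succ_right_eq_div_mul (s : ℝ) (k : ℕ) :
    genBinom s (k + 1) = s / (k + 1) * genBinom (s - 1) k := by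
  rw [genBinom, genBinom, prod_range_succ', Nat.factorial_succ]
  push_cast
  field_simp
  ring_nf

lemma genBinom_sub_one_add_genBinom_sub_one (s : ℝ) (k : ℕ) :
    genBinom (s - 1) (k + 1) + genBinom (s - 1) k = genBinom s (k + 1) := by
  rw [genBinom_succ_right (s - 1) k, genBinom_succ_right_eq_div_mul s k]
  field_simp
  ring

lemma genBinom_natCast_self (k : ℕ) : genBinom k k = 1 := by
  induction k with
  | zero => simp
  | succ k ih =>
    rw [genBinom_succ_right_eq_div_mul]
    push_cast
    rw [add_sub_cancel_right, ih]
    field_simp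

lemma genBinom_nonneg {s : ℝ} {k : ℕ} (hs : k - 1 ≤ s) : 0 ≤ genBinom s k := by
  refine div_nonneg (prod_nonneg fun i hi => ?_) (Nat.cast_nonneg _)
  have : (i : ℝ) + 1 ≤ k := by exact_mod_cast mem_range.1 hi
  linarith

lemma genBinom_strictMonoOn (k : ℕ) : StrictMonoOn (genBinom · (k + 1)) (Set.Ici (k : ℝ)) := by
  intro y hy z _ hyz
  simp only [Set.mem_Ici] at hy
  have hpos : ∀ i ∈ range k, 0 < y - i := fun i hi => by
    have : (i : ℝ) + 1 ≤ k := by exact_mod_cast mem_range.1 hi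
    linarith
  refine div_lt_div_of_pos_right ?_ (by positivity)
  rw [prod_range_succ, prod_range_succ]
  refine mul_lt_mul' (prod_le_prod (fun i hi => (hpos i hi).le) fun i _ => by linarith)
    (by linarith) (by linarith) (prod_pos fun i hi => by linarith [hpos i hi])

lemma one_le_genBinom {s : ℝ} {k : ℕ} (hs : k ≤ s) : 1 ≤ genBinom s k := by
  cases k with
  | zero => simp
  | succ k =>
    rw [← genBinom_natCast_self (k + 1)]
    push_cast at hs ⊢
    exact (genBinom_strictMonoOn k).monotoneOn (by simp) (by simp; linarith) hs

lemma exists_genBinom_eq (k : ℕ) {c : ℝ} (hc : 1 ≤ c) :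
    ∃ x : ℝ, k + 1 ≤ x ∧ genBinom x (k + 1) = c := by
  have hb : (k + 1 : ℝ) ≤ (k + 1) * c := le_mul_of_one_le_right (by positivity) hc
  have hcb : c ≤ genBinom ((k + 1) * c) (k + 1) := by
    rw [genBinom_succ_right_eq_div_mul, mul_div_cancel_left₀ _ (by positivity)]
    exact le_mul_of_one_le_right (by linarith) (one_le_genBinom (by linarith))
  have hcont : ContinuousOn (genBinom · (k + 1)) (Set.Icc (k + 1 : ℝ) ((k + 1) * c)) :=
    Continuous.continuousOn (by unfold genBinom; fun_prop)
  obtain ⟨x, hx, hxc⟩ := intermediate_value_Icc hb hcont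
    ⟨by exact_mod_cast (genBinom_natCast_self (k + 1)).le.trans hc, hcb⟩
  exact ⟨x, hx.1, hxc⟩

lemma nonempty_of_genBinom_le_card {α : Type*} {F : Finset α} {k : ℕ} {x : ℝ} (hx : k ≤ x)
    (hFx : genBinom x k ≤ #F) : F.Nonempty :=
  card_pos.1 (by exact_mod_cast (one_le_genBinom hx).trans hFx)

section MemberSubfamily

variable {α : Type*} [DecidableEq α] {𝒜 : Finset (Finset α)} {k : ℕ}

lemma Set.Sized.memberSubfamily (a : α) (h𝒜 : (𝒜 : Set (Finset α)).Sized (k + 1)) :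
    (𝒜.memberSubfamily a : Set (Finset α)).Sized k := by
  intro s hs
  obtain ⟨hs, has⟩ := mem_memberSubfamily.1 hs
  simpa [card_insert_of_notMem has] using h𝒜 hs

lemma Set.Sized.nonMemberSubfamily (a : α) (h𝒜 : (𝒜 : Set (Finset α)).Sized k) :
    (𝒜.nonMemberSubfamily a : Set (Finset α)).Sized k :=
  fun _ hs => h𝒜 (mem_nonMemberSubfamily.1 hs).1

lemma shadow_nonempty_of_sized (h𝒜 : (𝒜 : Set (Finset α)).Sized (k + 1)) (hne : 𝒜.Nonempty) :
    (∂ 𝒜).Nonempty := by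
  obtain ⟨s, hs⟩ := hne
  obtain ⟨a, ha⟩ := card_pos.1 (by rw [h𝒜 hs]; omega : 0 < #s)
  exact ⟨_, erase_mem_shadow hs ha⟩

/-- The sets of `∂ 𝒜` avoiding `a` contain `𝒜.memberSubfamily a`, and those containing `a` contain
`insert a` of `∂ (𝒜.memberSubfamily a)`. -/
lemma card_memberSubfamily_add_card_shadow_le (a : α) (𝒜 : Finset (Finset α)) :
    #(𝒜.memberSubfamily a) + #(∂ (𝒜.memberSubfamily a)) ≤ #(∂ 𝒜) := by
  have hnon : 𝒜.memberSubfamily a ⊆ (∂ 𝒜).nonMemberSubfamily a := fun s hs => by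
    obtain ⟨hs, has⟩ := mem_memberSubfamily.1 hs
    exact mem_nonMemberSubfamily.2 ⟨mem_shadow_iff_insert_mem.2 ⟨a, has, hs⟩, has⟩
  have hmem : ∂ (𝒜.memberSubfamily a) ⊆ (∂ 𝒜).memberSubfamily a := fun t ht => by
    obtain ⟨b, hbt, hb⟩ := mem_shadow_iff_insert_mem.1 ht
    obtain ⟨hb, hab⟩ := mem_memberSubfamily.1 hb
    have hba : b ≠ a := by rintro rfl; simp at hab
    refine mem_memberSubfamily.2 ⟨mem_shadow_iff_insert_mem.2 ⟨b, ?_, ?_⟩, fun h => hab ?_⟩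
    · simp [hba, hbt]
    · rwa [insert_comm]
    · exact mem_insert_of_mem h
  calc #(𝒜.memberSubfamily a) + #(∂ (𝒜.memberSubfamily a))
      ≤ #((∂ 𝒜).nonMemberSubfamily a) + #((∂ 𝒜).memberSubfamily a) :=
        add_le_add (card_le_card hnon) (card_le_card hmem)
    _ = #(∂ 𝒜) := by rw [add_comm, card_memberSubfamily_add_card_nonMemberSubfamily]

end MemberSubfamily

lemma UV.compress_singleton_singleton {α : Type*} [DecidableEq α] {i j : α} (hij : i ≠ j)
    {s : Finset α} (hj : j ∈ s) (hi : i ∉ s) :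
    UV.compress {i} {j} s = insert i (s.erase j) := by
  rw [UV.compress_of_disjoint_of_le (by simpa using hi) (by simpa using hj)]
  ext a
  simp only [sup_eq_union, mem_sdiff, mem_union, mem_singleton, mem_insert, mem_erase]
  grind

section Shifted

variable {α : Type*} [DecidableEq α] [LinearOrder α]

def IsShifted (𝒜 : Finset (Finset α)) : Prop :=
  ∀ ⦃i j : α⦄, i < j → UV.IsCompressed {i} {j} 𝒜

lemma IsShifted.insert_erase_mem {𝒜 : Finset (Finset α)} (h𝒜 : IsShifted 𝒜) {s : Finset α}
    (hs : s ∈ 𝒜) {i j : α} (hij : i < j) (hj : j ∈ s) (hi : i ∉ s) :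
    insert i (s.erase j) ∈ 𝒜 := by
  rw [← UV.compress_singleton_singleton hij.ne hj hi, ← h𝒜 hij]
  exact UV.compress_mem_compression hs

lemma IsShifted.shadow_nonMemberSubfamily_subset {𝒜 : Finset (Finset α)} (h𝒜 : IsShifted 𝒜)
    {a : α} (ha : IsBot a) : ∂ (𝒜.nonMemberSubfamily a) ⊆ 𝒜.memberSubfamily a := fun t ht => by
  obtain ⟨s, hs, j, hj, rfl⟩ := mem_shadow_iff.1 ht
  obtain ⟨hs, has⟩ := mem_nonMemberSubfamily.1 hs
  have haj : a < j := (ha j).lt_of_ne (by rintro rfl; exact has hj)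
  exact mem_memberSubfamily.2
    ⟨h𝒜.insert_erase_mem hs haj hj has, fun h => has (mem_of_mem_erase h)⟩

end Shifted

lemma UV.sum_compression_lt {β : Type*} [GeneralizedBooleanAlgebra β]
    [DecidableRel (α := β) Disjoint] [DecidableLE β] [DecidableEq β] {u v : β} {s : Finset β}
    (f : β → ℕ)
    (hf : ∀ a, UV.compress u v a ≠ a → f (UV.compress u v a) < f a) (hs : 𝓒 u v s ≠ s) :
    ∑ a ∈ 𝓒 u v s, f a < ∑ a ∈ s, f a := by
  set moved := {a ∈ s | UV.compress u v a ∉ s}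
  have hmoved : moved.Nonempty := by
    refine nonempty_iff_ne_empty.2 fun h => hs ?_
    have := filter_union_filter_not_eq (UV.compress u v · ∈ s) s
    rw [UV.compression, filter_image]
    simp_all [moved]
  rw [UV.compression, sum_union UV.compress_disjoint, filter_image, sum_image UV.compress_injOn,
    ← sum_filter_add_sum_filter_not s (UV.compress u v · ∈ s)]
  refine add_lt_add_right (sum_lt_sum_of_nonempty hmoved fun a ha => hf a ?_) _
  obtain ⟨ha, hca⟩ := mem_filter.1 ha
  exact fun h => hca (by rwa [h])

section Lovasz

variable {n : ℕ}

lemma sum_val_compress_lt {i j : Fin n} (hij : i < j) {s : Finset (Fin n)}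
    (hs : UV.compress {i} {j} s ≠ s) :
    ∑ a ∈ UV.compress {i} {j} s, (a : ℕ) < ∑ a ∈ s, (a : ℕ) := by
  by_cases h : j ∈ s ∧ i ∉ s
  · rw [UV.compress_singleton_singleton hij.ne h.1 h.2,
      sum_insert fun hi => h.2 (mem_of_mem_erase hi), ← add_sum_erase s _ h.1]
    exact Nat.add_lt_add_right hij _
  · refine absurd ?_ hs
    rw [UV.compress, if_neg]
    simpa [and_comm] using h

theorem exists_isShifted {F : Finset (Finset (Fin n))} {r : ℕ}
    (hF : (F : Set (Finset (Fin n))).Sized r) :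
    ∃ G : Finset (Finset (Fin n)), IsShifted G ∧ (G : Set (Finset (Fin n))).Sized r ∧
      #G = #F ∧ #(∂ G) ≤ #(∂ F) := by
  classical
  let weight (G : Finset (Finset (Fin n))) : ℕ := ∑ s ∈ G, ∑ a ∈ s, (a : ℕ)
  obtain ⟨G, hG, hmin⟩ := exists_min_image
    (univ.filter fun G : Finset (Finset (Fin n)) =>
      (G : Set (Finset (Fin n))).Sized r ∧ #G = #F ∧ #(∂ G) ≤ #(∂ F)) weight
    ⟨F, by simp [hF]⟩
  simp only [mem_filter, mem_univ, true_and] at hG hmin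
  refine ⟨G, fun i j hij => ?_, hG⟩
  by_contra hc
  refine (UV.sum_compression_lt _ (fun s => sum_val_compress_lt hij) hc).not_ge
    (hmin _ ⟨?_, ?_, ?_⟩)
  · exact hG.1.uvCompression (by simp)
  · rw [UV.card_compression, hG.2.1]
  · refine (UV.card_shadow_compression_le _ _ fun x hx => ⟨j, mem_singleton_self j, ?_⟩).trans
      hG.2.2
    rw [mem_singleton.1 hx, erase_singleton, erase_singleton]
    exact UV.isCompressed_self _ _

/-- If not, the sets of `G` avoiding `e` number more than `C(x - 1, k + 2)`, while shiftedness
puts their shadow inside the small family `G.memberSubfamily e`; this contradicts `ih` for them. -/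
lemma IsShifted.genBinom_sub_one_le_card_memberSubfamily {k : ℕ} {G : Finset (Finset (Fin n))}
    (hGsh : IsShifted G) (hG : (G : Set (Finset (Fin n))).Sized (k + 2)) {e : Fin n}
    (he : IsBot e) {x : ℝ} (hx : k + 2 ≤ x) (hGx : genBinom x (k + 2) ≤ #G)
    (ih : ∀ F : Finset (Finset (Fin n)), (F : Set (Finset (Fin n))).Sized (k + 2) → #F < #G →
      ∀ y : ℝ, k + 2 ≤ y → genBinom y (k + 2) ≤ #F → genBinom y (k + 1) ≤ #(∂ F)) :
    genBinom (x - 1) (k + 1) ≤ #(G.memberSubfamily e) := by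
  by_contra! hF₁
  set F₁ := G.memberSubfamily e
  set F₀ := G.nonMemberSubfamily e
  have hsplit : (#F₁ : ℝ) + #F₀ = #G := by
    exact_mod_cast card_memberSubfamily_add_card_nonMemberSubfamily e G
  have hpascal := genBinom_sub_one_add_genBinom_sub_one x (k + 1)
  have hF₀x : genBinom (x - 1) (k + 2) < #F₀ := by linarith
  have hF₀ne : F₀.Nonempty :=
    card_pos.1 (by exact_mod_cast (genBinom_nonneg (by push_cast; linarith)).trans_lt hF₀x)
  obtain ⟨y, hy, hyF₀⟩ :=
    exists_genBinom_eq (k + 1) (c := #F₀) (by exact_mod_cast hF₀ne.card_pos)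
  push_cast at hy
  have hF₀F₁ : ∂ F₀ ⊆ F₁ := hGsh.shadow_nonMemberSubfamily_subset he
  have hF₀G : #F₀ < #G := by
    have := ((shadow_nonempty_of_sized (hG.nonMemberSubfamily e) hF₀ne).mono hF₀F₁).card_pos
    have : (#F₀ : ℝ) < #G := by linarith [show (1 : ℝ) ≤ #F₁ by exact_mod_cast this]
    exact_mod_cast this
  have hxy : x - 1 < y := by
    rw [← (genBinom_strictMonoOn (k + 1)).lt_iff_lt (by simp; linarith)
      (by simp; linarith)]
    linarith
  have hF₀y := ih F₀ (hG.nonMemberSubfamily e) hF₀G y (by linarith) hyF₀.le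
  have hmono := genBinom_strictMonoOn k (by simp; linarith) (by simp; linarith) hxy
  have : (#(∂ F₀) : ℝ) ≤ #F₁ := by exact_mod_cast card_le_card hF₀F₁
  simp only at hmono
  linarith

theorem genBinom_le_card_shadow (k : ℕ) {F : Finset (Finset (Fin n))}
    (hF : (F : Set (Finset (Fin n))).Sized (k + 1)) {x : ℝ} (hx : k + 1 ≤ x)
    (hFx : genBinom x (k + 1) ≤ #F) : genBinom x k ≤ #(∂ F) := by
  induction k generalizing F x with
  | zero =>
    have hFne := nonempty_of_genBinom_le_card (by exact_mod_cast hx) hFx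
    simpa using (shadow_nonempty_of_sized hF hFne).card_pos
  | succ k ihk =>
  induction hN : #F using Nat.strong_induction_on generalizing F x with
  | _ N ihN =>
  push_cast at hx
  obtain ⟨G, hGsh, hG, hGF, hGshadow⟩ := exists_isShifted hF
  rw [← hGF] at hFx hN
  obtain ⟨A, hA⟩ := nonempty_of_genBinom_le_card (by push_cast; linarith) hFx
  obtain ⟨b, -⟩ := card_pos.1 (by rw [hG hA]; omega : 0 < #A)
  obtain ⟨e, he⟩ : ∃ e : Fin n, IsBot e := ⟨⟨0, b.pos⟩, fun j => Nat.zero_le j⟩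
  have h₁ := hGsh.genBinom_sub_one_le_card_memberSubfamily hG he (by linarith) hFx
    fun F' hF' hF'G y hy hF'y => ihN _ (hN ▸ hF'G) hF' (by push_cast; linarith) hF'y rfl
  have h₂ := ihk (hG.memberSubfamily _) (by linarith) h₁
  have h₃ := card_memberSubfamily_add_card_shadow_le e G
  calc genBinom x (k + 1) = genBinom (x - 1) (k + 1) + genBinom (x - 1) k :=
        (genBinom_sub_one_add_genBinom_sub_one x k).symm
    _ ≤ #(G.memberSubfamily e) + #(∂ (G.memberSubfamily e)) := add_le_add h₁ h₂
    _ ≤ #(∂ F) := by exact_mod_cast h₃.trans hGshadow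

theorem genBinom_le_card_shadow_iterate (k j : ℕ) {F : Finset (Finset (Fin n))}
    (hF : (F : Set (Finset (Fin n))).Sized (k + j)) {x : ℝ} (hx : k + j ≤ x)
    (hFx : genBinom x (k + j) ≤ #F) : genBinom x k ≤ #(∂^[j] F) := by
  induction j generalizing F with
  | zero => simpa using hFx
  | succ j ih =>
    rw [Function.iterate_succ_apply]
    push_cast at hx
    refine ih (by simpa using hF.shadow) (by linarith) ?_
    exact genBinom_le_card_shadow (k + j) hF (by push_cast; linarith) hFx

lemma lowerShadow_eq_shadow_iterate {r j : ℕ} {S : Finset (Finset (Fin n))}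
    (hS : (S : Set (Finset (Fin n))).Sized (r + j)) : lowerShadow n r S = ∂^[j] S := by
  ext t
  simp only [lowerShadow, mem_filter, mem_univ, true_and,
    mem_shadow_iterate_iff_exists_mem_card_add]
  constructor
  · rintro ⟨rfl, A, hA, htA⟩
    exact ⟨A, hA, htA, hS hA⟩
  · rintro ⟨A, hA, htA, hcard⟩
    exact ⟨by rw [hS hA] at hcard; omega, A, hA, htA⟩

end Lovasz

theorem lower_shadow_bound_general (k n : ℕ) (hk : 3 ≤ k)
    (S : Finset (Finset (Fin n))) (hS : ∀ A ∈ S, A.card = k)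
    (s : ℝ) (hs : (k : ℝ) ≤ s) (hcard : genBinom s k = S.card) :
    genBinom s 2 ≤ ((lowerShadow n 2 S).card : ℝ) := by
  obtain ⟨j, rfl⟩ : ∃ j, k = 2 + j := ⟨k - 2, by omega⟩
  have hS' : (S : Set (Finset (Fin n))).Sized (2 + j) := fun A hA => hS A hA
  rw [lowerShadow_eq_shadow_iterate hS']
  exact genBinom_le_card_shadow_iterate 2 j hS' (by exact_mod_cast hs) hcard.le

/-- **Lemma 7(i) of the paper (Kühn–Osthus, Lemma 4(i)).**  Let `3 ≤ k ≤ n` and let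
`S ⊆ [n]^{(k)}` be nonempty.  If the real number `s ≥ k` satisfies `C(s,k) = |S|`,
then `|δ_{k−2}^-(S)| ≥ C(s,2) = s(s−1)/2`. -/
theorem lower_shadow_bound (k n : ℕ) (hk : 3 ≤ k) (hkn : k ≤ n)
    (S : Finset (Finset (Fin n))) (hS : ∀ A ∈ S, A.card = k) (hne : S.Nonempty)
    (s : ℝ) (hs : (k : ℝ) ≤ s) (hcard : genBinom s k = S.card) :
    genBinom s 2 ≤ ((lowerShadow n 2 S).card : ℝ) :=
  lower_shadow_bound_general k n hk S hS s hs hcard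
end

section
/- Suppose S′ ⊊ [n]^{(2)} is a proper subset, and let c, d be nonnegative integers with c < n, d < n − (c+1), and |S′| = cn − C(c+1, 2) + d. Then |δ_1^+(S′)| ≥ c·C(n−c, 2) + d(n−c−2) − C(d, 2). -/
/-- The set of all `r`-subsets of `Fin n` containing some member of `S`
(for `S ⊆ [n]^{(k)}` and `r = k + ℓ`, this is the `ℓ`-th upper shadow `δ_ℓ^+(S)`). -/
def upperShadow (n r : ℕ) (S : Finset (Finset (Fin n))) : Finset (Finset (Fin n)) :=
  Finset.univ.filter fun t => t.card = r ∧ ∃ A ∈ S, A ⊆ t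

/-!
Complementation turns upper shadows of pairs into shadows of `(n - 2)`-sets and reverses colex,
so by Kruskal–Katona no family of pairs has a smaller upper shadow than the colex-final segment
of the same size. For `|S'| = cn - C(c+1,2) + d` that segment consists of all pairs meeting the
top `c` points together with the pairs `{x, v}`, where `v` is the next point and `x` is one of the
`d` points just below `v`. Its upper shadow contains every triple meeting the top `c` points and
every triple `{v} ∪ p` with `p` a pair below `v` not contained in the lowest `n - c - 1 - d`
points; counting these gives the bound.
-/

open Finset Finset.Colex
open scoped FinsetFamily

lemma Nat.add_choose_two (a b : ℕ) : (a + b).choose 2 = a.choose 2 + a * b + b.choose 2 := by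
  rw [Nat.add_choose_eq, Nat.sum_antidiagonal_eq_sum_range_succ_mk]
  simp only [sum_range_succ, sum_range_zero, Nat.reduceSub, Nat.choose_zero_right,
    Nat.choose_one_right]
  ring

lemma Nat.add_choose_three (a b : ℕ) :
    (a + b).choose 3 = a.choose 3 + a.choose 2 * b + a * b.choose 2 + b.choose 3 := by
  rw [Nat.add_choose_eq, Nat.sum_antidiagonal_eq_sum_range_succ_mk]
  simp only [sum_range_succ, sum_range_zero, Nat.reduceSub, Nat.choose_zero_right,
    Nat.choose_one_right]
  ring

lemma Nat.cast_choose_two_mul_two (k : ℕ) : (k.choose 2 : ℤ) * 2 = k * (k - 1) := by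
  rcases k with _ | k
  · simp
  · have h := Nat.add_one_mul_choose_eq k 1
    rw [Nat.choose_one_right] at h
    zify at h
    push_cast
    linarith

lemma Nat.cast_choose_two_sub_choose_two {n c : ℕ} (h : c ≤ n) :
    ((n.choose 2 - (n - c).choose 2 : ℕ) : ℤ) = c * n - (c + 1).choose 2 := by
  obtain ⟨m, rfl⟩ := Nat.exists_eq_add_of_le' h
  rw [Nat.add_sub_cancel, Nat.add_choose_two, Nat.add_assoc, Nat.add_sub_cancel_left,
    Nat.add_choose_two]
  push_cast [Nat.choose_one_right]
  simp only [mul_one, Nat.choose_succ_self, CharP.cast_eq_zero, add_zero]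
  linarith [Nat.cast_choose_two_mul_two c]

lemma Finset.card_powersetCard_sdiff_powersetCard {α : Type*} [DecidableEq α] {s t : Finset α}
    (h : s ⊆ t) (r : ℕ) :
    #(powersetCard r t \ powersetCard r s) = (#t).choose r - (#s).choose r := by
  rw [card_sdiff_of_subset (powersetCard_mono h), card_powersetCard, card_powersetCard]

namespace Finset.Colex

variable {α : Type*} [LinearOrder α]

lemma toColex_compl_lt_toColex_compl [Fintype α] {s t : Finset α} :
    toColex sᶜ < toColex tᶜ ↔ toColex t < toColex s := by
  simp only [toColex_lt_toColex_iff_exists_forall_lt, mem_compl, not_not]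
  refine exists_congr fun a => ?_
  constructor
  · rintro ⟨hat, has, h⟩
    exact ⟨has, hat, fun b hbt hbs => h b hbs hbt⟩
  · rintro ⟨has, hat, h⟩
    exact ⟨hat, has, fun b hbs hbt => h b hbt hbs⟩

def IsFinalSeg (𝒜 : Finset (Finset α)) (r : ℕ) : Prop :=
  (𝒜 : Set (Finset α)).Sized r ∧
    ∀ ⦃s t : Finset α⦄, s ∈ 𝒜 → toColex s < toColex t ∧ #t = r → t ∈ 𝒜

lemma IsFinalSeg.isInitSeg_compls [Fintype α] {𝒜 : Finset (Finset α)} {r : ℕ}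
    (h : IsFinalSeg 𝒜 r) : IsInitSeg 𝒜ᶜˢ (Fintype.card α - r) := by
  refine ⟨h.1.compls, fun s t hs ⟨hts, ht⟩ => ?_⟩
  rw [mem_compls] at hs ⊢
  refine h.2 hs ⟨by simpa using toColex_compl_lt_toColex_compl.2 hts, ?_⟩
  have hs_card := h.1 hs
  rw [card_compl, ht, ← hs_card, card_compl, Nat.sub_sub_self (card_le_univ _)]

end Finset.Colex

theorem Finset.kruskal_katona_upShadow {n r : ℕ} {𝒜 𝒞 : Finset (Finset (Fin n))}
    (h𝒜 : (𝒜 : Set (Finset (Fin n))).Sized r) (h𝒞𝒜 : #𝒞 ≤ #𝒜) (h𝒞 : IsFinalSeg 𝒞 r) :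
    #(∂⁺ 𝒞) ≤ #(∂⁺ 𝒜) := by
  simpa using kruskal_katona h𝒜.compls (by simpa using h𝒞𝒜) h𝒞.isInitSeg_compls

lemma upperShadow_eq_upShadow {n r : ℕ} {S : Finset (Finset (Fin n))}
    (hS : (S : Set (Finset (Fin n))).Sized r) : upperShadow n (r + 1) S = ∂⁺ S := by
  ext t
  simp only [upperShadow, mem_filter, mem_univ, true_and,
    mem_upShadow_iff_exists_mem_card_add_one]
  constructor
  · rintro ⟨ht, A, hA, hAt⟩
    exact ⟨A, hA, hAt, by rw [ht, hS hA]⟩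
  · rintro ⟨A, hA, hAt, ht⟩
    exact ⟨by rw [ht, hS hA], A, hA, hAt⟩

section TailPairs

variable {n : ℕ}

def tailPairs (b v : Fin n) : Finset (Finset (Fin n)) :=
  (powersetCard 2 univ \ powersetCard 2 (Iic v)) ∪ (Ico b v).image fun x => {x, v}

lemma mem_tailPairs {b v : Fin n} {q : Finset (Fin n)} :
    q ∈ tailPairs b v ↔ #q = 2 ∧ ¬ q ⊆ Iic v ∨ ∃ x ∈ Ico b v, {x, v} = q := by
  simp only [tailPairs, mem_union, mem_sdiff, mem_powersetCard, subset_univ, true_and, mem_image]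
  tauto

lemma sized_tailPairs (b v : Fin n) : (tailPairs b v : Set (Finset (Fin n))).Sized 2 := by
  intro q hq
  rcases mem_tailPairs.1 hq with ⟨hq, -⟩ | ⟨x, hx, rfl⟩
  · exact hq
  · exact card_pair (mem_Ico.1 hx).2.ne

lemma isFinalSeg_tailPairs (b v : Fin n) : IsFinalSeg (tailPairs b v) 2 := by
  refine ⟨sized_tailPairs b v, fun p q hp ⟨hpq, hq⟩ => ?_⟩
  by_cases hqv : q ⊆ Iic v
  swap
  · exact mem_tailPairs.2 (Or.inl ⟨hq, hqv⟩)
  have hpv : p ⊆ Iic v := fun x hx =>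
    mem_Iic.2 (forall_le_mono hpq.le (fun y hy => mem_Iic.1 (hqv hy)) x hx)
  obtain ⟨w, hw, rfl⟩ : ∃ w ∈ Ico b v, {w, v} = p := by simpa [mem_tailPairs, hpv] using hp
  obtain ⟨a, haq, hap, hmax⟩ := toColex_lt_toColex_iff_exists_forall_lt.1 hpq
  have hav : a < v := (mem_Iic.1 (hqv haq)).lt_of_ne (by simp at hap; tauto)
  have hvq : v ∈ q := by_contra fun h => (hmax v (by simp) h).not_gt hav
  obtain ⟨u, hu⟩ := card_eq_one.1 (by rw [card_erase_of_mem hvq, hq] : #(q.erase v) = 1)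
  have huv : u ≠ v := ne_of_mem_erase (hu ▸ mem_singleton_self u)
  have hq : q = {u, v} := by rw [← insert_erase hvq, hu, pair_comm]
  subst hq
  have hwu : w < u := (insert_lt_insert (by simpa using (mem_Ico.1 hw).2.ne) (by simpa)).1 hpq
  have hu_lt : u < v := (mem_Iic.1 (hqv (mem_insert_self u _))).lt_of_ne huv
  exact mem_tailPairs.2 (Or.inr ⟨u, mem_Ico.2 ⟨(mem_Ico.1 hw).1.trans hwu.le, hu_lt⟩, rfl⟩)

lemma card_tailPairs_le (b v : Fin n) :
    #(tailPairs b v) ≤ n.choose 2 - ((v : ℕ) + 1).choose 2 + (v - b : ℕ) :=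
  calc #(tailPairs b v)
      ≤ #(powersetCard 2 univ \ powersetCard 2 (Iic v)) +
          #((Ico b v).image fun x => ({x, v} : Finset (Fin n))) := card_union_le _ _
    _ ≤ n.choose 2 - ((v : ℕ) + 1).choose 2 + (v - b : ℕ) := by
        rw [card_powersetCard_sdiff_powersetCard (subset_univ _), card_univ, Fintype.card_fin,
          Fin.card_Iic, ← Fin.card_Ico]
        exact Nat.add_le_add_left card_image_le _

lemma mem_upShadow_tailPairs_of_not_subset {b v : Fin n} {t : Finset (Fin n)} (ht : #t = 3)
    (htv : ¬ t ⊆ Iic v) : t ∈ ∂⁺ (tailPairs b v) := by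
  obtain ⟨x, hxt, hxv⟩ := not_subset.1 htv
  obtain ⟨u, hxu, hut, hu⟩ :=
    exists_subsuperset_card_eq (singleton_subset_iff.2 hxt) (by simp) (by omega : 2 ≤ #t)
  refine mem_upShadow_iff_exists_mem_card_add_one.2 ⟨u, ?_, hut, by rw [ht, hu]⟩
  exact mem_tailPairs.2 (Or.inl ⟨hu, fun h => hxv (h (hxu (mem_singleton_self x)))⟩)

lemma insert_mem_upShadow_tailPairs {b v : Fin n} {p : Finset (Fin n)} (hpv : p ⊆ Iio v)
    (hp : #p = 2) (hpb : ¬ p ⊆ Iio b) : insert v p ∈ ∂⁺ (tailPairs b v) := by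
  obtain ⟨x, hxp, hxb⟩ := not_subset.1 hpb
  have hxv := mem_Iio.1 (hpv hxp)
  have hvp : v ∉ p := fun h => lt_irrefl v (mem_Iio.1 (hpv h))
  refine mem_upShadow_iff_exists_mem_card_add_one.2 ⟨{x, v}, ?_,
    insert_subset (mem_insert_of_mem hxp) (by simp), ?_⟩
  · exact mem_tailPairs.2 (Or.inr ⟨x, mem_Ico.2 ⟨by simpa using hxb, hxv⟩, rfl⟩)
  · rw [card_insert_of_notMem hvp, hp, card_pair hxv.ne]

lemma card_upShadow_tailPairs {b v : Fin n} (hbv : b ≤ v) :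
    n.choose 3 - ((v : ℕ) + 1).choose 3 + ((v : ℕ).choose 2 - (b : ℕ).choose 2)
      ≤ #(∂⁺ (tailPairs b v)) := by
  set U₁ := powersetCard 3 univ \ powersetCard 3 (Iic v)
  set U₂ := (powersetCard 2 (Iio v) \ powersetCard 2 (Iio b)).image (insert v)
  have hvU₂ : ∀ p ∈ powersetCard 2 (Iio v) \ powersetCard 2 (Iio b), v ∉ p := fun p hp hv =>
    lt_irrefl v (mem_Iio.1 ((mem_powersetCard.1 (mem_sdiff.1 hp).1).1 hv))
  have hU₁ : #U₁ = n.choose 3 - ((v : ℕ) + 1).choose 3 := by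
    rw [card_powersetCard_sdiff_powersetCard (subset_univ _), card_univ, Fintype.card_fin,
      Fin.card_Iic]
  have hU₂ : #U₂ = (v : ℕ).choose 2 - (b : ℕ).choose 2 := by
    rw [card_image_of_injOn, card_powersetCard_sdiff_powersetCard (Iio_subset_Iio hbv),
      Fin.card_Iio, Fin.card_Iio]
    intro p hp q hq hpq
    rw [← erase_insert (hvU₂ p hp), ← erase_insert (hvU₂ q hq), hpq]
  have hdisj : Disjoint U₁ U₂ := by
    refine disjoint_left.2 fun t ht₁ ht₂ => (mem_sdiff.1 ht₁).2 ?_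
    obtain ⟨p, hp, rfl⟩ := mem_image.1 ht₂
    obtain ⟨⟨hpv, hp2⟩, -⟩ := by simpa only [mem_sdiff, mem_powersetCard] using hp
    refine mem_powersetCard.2 ⟨insert_subset (mem_Iic.2 le_rfl) fun x hx => ?_, ?_⟩
    · exact mem_Iic.2 (mem_Iio.1 (hpv hx)).le
    · rw [card_insert_of_notMem (hvU₂ p hp), hp2]
  have hsub : U₁ ∪ U₂ ⊆ ∂⁺ (tailPairs b v) := by
    intro t ht
    rcases mem_union.1 ht with ht | ht
    · obtain ⟨⟨-, ht3⟩, htv⟩ := by simpa only [U₁, mem_sdiff, mem_powersetCard] using ht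
      exact mem_upShadow_tailPairs_of_not_subset ht3 fun h => htv ⟨h, ht3⟩
    · obtain ⟨p, hp, rfl⟩ := mem_image.1 ht
      obtain ⟨⟨hpv, hp2⟩, hpb⟩ := by simpa only [mem_sdiff, mem_powersetCard] using hp
      exact insert_mem_upShadow_tailPairs hpv hp2 fun h => hpb ⟨h, hp2⟩
  calc n.choose 3 - ((v : ℕ) + 1).choose 3 + ((v : ℕ).choose 2 - (b : ℕ).choose 2)
      = #(U₁ ∪ U₂) := by rw [card_union_of_disjoint hdisj, hU₁, hU₂]
    _ ≤ #(∂⁺ (tailPairs b v)) := card_le_card hsub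

end TailPairs

lemma le_choose_three_sub_add_choose_two_sub {n c d : ℕ} (h : c + d + 2 ≤ n) :
    (c : ℤ) * (n - c).choose 2 + d * ((n : ℤ) - c - 2) - d.choose 2 ≤
      ((n.choose 3 - (n - c).choose 3 +
        ((n - c - 1).choose 2 - (n - c - 1 - d).choose 2) : ℕ) : ℤ) := by
  obtain ⟨e, rfl⟩ : ∃ e, n = c + (e + 1 + d + 1) := ⟨n - c - d - 2, by omega⟩
  simp only [Nat.add_sub_cancel_left, Nat.add_sub_cancel, Nat.add_choose_three c,
    Nat.add_choose_two (e + 1) d]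
  push_cast [Nat.add_sub_cancel_left, Nat.add_assoc]
  nlinarith [Nat.zero_le (c.choose 3), Nat.zero_le (c.choose 2), Nat.cast_choose_two_mul_two d]

theorem upper_shadow_bound_one_general (n c d : ℕ)
    (S' : Finset (Finset (Fin n)))
    (hsub : S' ⊂ Finset.univ.filter fun t : Finset (Fin n) => t.card = 2)
    (hd : d < n - (c + 1))
    (hcard : (S'.card : ℤ) = c * n - Nat.choose (c + 1) 2 + d) :
    (c : ℤ) * Nat.choose (n - c) 2 + d * ((n : ℤ) - c - 2) - Nat.choose d 2
      ≤ ((upperShadow n 3 S').card : ℤ) := by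
  have hS : (S' : Set (Finset (Fin n))).Sized 2 := fun A hA => (mem_filter.1 (hsub.subset hA)).2
  have hcdn : c + d + 2 ≤ n := by omega
  set v : Fin n := ⟨n - c - 1, by omega⟩
  set b : Fin n := ⟨n - c - 1 - d, by omega⟩
  have hv : (v : ℕ) + 1 = n - c := by simp only [v]; omega
  have hvb : (v - b : ℕ) = d := by simp only [v, b]; omega
  have hT : #(tailPairs b v) ≤ #S' := by
    have h := card_tailPairs_le b v
    rw [hv, hvb] at h
    zify at h ⊢
    rw [hcard, ← Nat.cast_choose_two_sub_choose_two (by omega : c ≤ n)]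
    exact_mod_cast h
  calc _ ≤ ((n.choose 3 - (n - c).choose 3 +
          ((n - c - 1).choose 2 - (n - c - 1 - d).choose 2) : ℕ) : ℤ) :=
        le_choose_three_sub_add_choose_two_sub hcdn
    _ ≤ #(∂⁺ (tailPairs b v)) := by
        have h := card_upShadow_tailPairs (Fin.mk_le_mk.2 (Nat.sub_le _ d) : b ≤ v)
        rw [hv] at h
        exact_mod_cast h
    _ ≤ #(∂⁺ S') := mod_cast kruskal_katona_upShadow hS hT (isFinalSeg_tailPairs b v)
    _ = #(upperShadow n 3 S') := by rw [upperShadow_eq_upShadow hS]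

/-- **Lemma 7(ii) of the paper (from Kühn–Osthus).**  Suppose `S′ ⊊ [n]^{(2)}` is a
proper subset of the 2-subsets of `[n]`, and let `c, d ≥ 0` satisfy `c < n`,
`d < n − (c+1)` and `|S′| = cn − C(c+1,2) + d`.  Then
`|δ_1^+(S′)| ≥ c·C(n−c,2) + d(n−c−2) − C(d,2)`. -/
theorem upper_shadow_bound_one (n c d : ℕ)
    (S' : Finset (Finset (Fin n)))
    (hsub : S' ⊂ Finset.univ.filter fun t : Finset (Fin n) => t.card = 2)
    (hc : c < n) (hd : d < n - (c + 1))
    (hcard : (S'.card : ℤ) = c * n - Nat.choose (c + 1) 2 + d) :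
    (c : ℤ) * Nat.choose (n - c) 2 + d * ((n : ℤ) - c - 2) - Nat.choose d 2
      ≤ ((upperShadow n 3 S').card : ℤ) :=
  upper_shadow_bound_one_general n c d S' hsub hd hcard
end

section
/- If S′ ⊆ [n]^{(2)} and |S′| ≤ n−1, then |δ_2^+(S′)| ≥ |S′|·C(n−|S′|−1, 2) + C(|S′|, 2)·(n−|S′|−1). -/
/-!
Count the pairs `(e, t)` with `e ∈ S'` and `t` a 4-set containing `e`: there are
`|S'| · C(n - 2, 2)` of them. A 4-set containing `d ≥ 1` members of `S'` contributes
`d ≤ 1 + C(d, 2)`, and each of its `C(d, 2)` pairs of members `{e, f}` is charged to that pair: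
two distinct 2-sets span at least 3 points, so lie in at most `n - 3` common 4-sets. Hence
`|S'| · C(n - 2, 2) ≤ |δ₂⁺(S')| + C(|S'|, 2) · (n - 3)`, which rearranges to the claimed bound.
-/

open Finset

lemma Nat.self_le_one_add_choose_two (d : ℕ) : d ≤ 1 + d.choose 2 := by
  rcases d with _ | _ | d
  · simp
  · simp
  · simp only [Nat.choose_succ_succ, Nat.choose_zero_right, Nat.choose_one_right]
    omega

lemma Nat.mul_choose_sub_two_two_eq {m n : ℕ} (hm : m ≤ n - 1) :
    m * (n - 2).choose 2
      = m * (n - m - 1).choose 2 + m.choose 2 * (n - m - 1) + m.choose 2 * (n - 3) := by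
  rcases m with _ | _ | m
  · simp
  · obtain ⟨x, rfl⟩ : ∃ x, n = x + 2 := ⟨n - 2, by omega⟩
    simp
  · obtain ⟨x, rfl⟩ : ∃ x, n = x + m + 3 := ⟨n - m - 3, by omega⟩
    have h₁ : x + m + 3 - 2 = x + m + 1 := by omega
    have h₂ : x + m + 3 - (m + 2) - 1 = x := by omega
    have h₃ : x + m + 3 - 3 = x + m := by omega
    rw [h₁, h₂, h₃]
    qify
    simp only [Nat.cast_choose_two]
    push_cast
    ring

namespace Finset

lemma sum_le_card_filter_ne_zero_add_sum_choose_two {β : Type*} (T : Finset β) (d : β → ℕ) :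
    ∑ t ∈ T, d t ≤ #{t ∈ T | d t ≠ 0} + ∑ t ∈ T, (d t).choose 2 :=
  calc ∑ t ∈ T, d t = ∑ t ∈ T with d t ≠ 0, d t := (sum_filter_ne_zero T).symm
    _ ≤ ∑ t ∈ T with d t ≠ 0, (1 + (d t).choose 2) :=
        sum_le_sum fun t _ => Nat.self_le_one_add_choose_two _
    _ = #{t ∈ T | d t ≠ 0} + ∑ t ∈ T with d t ≠ 0, (d t).choose 2 := by
        rw [sum_add_distrib, card_eq_sum_ones]
    _ ≤ #{t ∈ T | d t ≠ 0} + ∑ t ∈ T, (d t).choose 2 := by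
        gcongr
        exact filter_subset _ _

lemma powersetCard_filter {α : Type*} (j : ℕ) (s : Finset α) (P : α → Prop) [DecidablePred P] :
    (s.filter P).powersetCard j = (s.powersetCard j).filter (fun p => ∀ a ∈ p, P a) := by
  ext p
  simp only [mem_powersetCard, mem_filter, subset_iff]
  grind

theorem sum_choose_card_filter {α β : Type*} (s : Finset α) (t : Finset β)
    (R : α → β → Prop) [∀ a b, Decidable (R a b)] (j : ℕ) :
    ∑ b ∈ t, (#{a ∈ s | R a b}).choose j
      = ∑ p ∈ s.powersetCard j, #{b ∈ t | ∀ a ∈ p, R a b} := by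
  simp_rw [← card_powersetCard, powersetCard_filter]
  exact (sum_card_bipartiteAbove_eq_sum_card_bipartiteBelow _).symm

lemma add_one_le_card_union {α : Type*} [DecidableEq α] {k : ℕ} {e f : Finset α}
    (he : #e = k) (hf : #f = k) (hef : e ≠ f) : k + 1 ≤ #(e ∪ f) := by
  have hfe : ¬ f ⊆ e := fun h => hef (eq_of_subset_of_card_le h (by omega)).symm
  exact he ▸ card_lt_card (left_lt_sup.2 hfe)

lemma card_filter_powersetCard_superset_le {α : Type*} [Fintype α] [DecidableEq α]
    {u : Finset α} {j r : ℕ} (hju : j ≤ #u) (hjr : j ≤ r) :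
    #{t ∈ univ.powersetCard r | u ⊆ t} ≤ (Fintype.card α - j).choose (r - j) := by
  obtain ⟨v, hvu, hv⟩ := exists_subset_card_eq hju
  calc #{t ∈ univ.powersetCard r | u ⊆ t}
      ≤ #{t ∈ univ.powersetCard r | v ⊆ t} :=
        card_le_card (monotone_filter_right _ fun _ _ h => hvu.trans h)
    _ = _ := by
        rw [card_filter_powersetCard_subset v univ r (subset_univ v) (hv ▸ hjr), card_univ, hv]

end Finset

lemma upperShadow_eq_filter (n r : ℕ) (S : Finset (Finset (Fin n))) :
    upperShadow n r S = {t ∈ (univ : Finset (Fin n)).powersetCard r | #{A ∈ S | A ⊆ t} ≠ 0} := by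
  ext t
  simp [upperShadow]

theorem card_mul_choose_le_card_upperShadow_add {n k r : ℕ} {S : Finset (Finset (Fin n))}
    (hS : ∀ A ∈ S, #A = k) (hkr : k < r) :
    #S * (n - k).choose (r - k)
      ≤ #(upperShadow n r S) + (#S).choose 2 * (n - (k + 1)).choose (r - (k + 1)) := by
  have hdeg : ∑ t ∈ univ.powersetCard r, #{A ∈ S | A ⊆ t} = #S * (n - k).choose (r - k) :=
    calc _ = ∑ A ∈ S, #{t ∈ univ.powersetCard r | A ⊆ t} :=
          (sum_card_bipartiteAbove_eq_sum_card_bipartiteBelow _).symm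
      _ = ∑ A ∈ S, (n - k).choose (r - k) := sum_congr rfl fun A hA => by
          rw [card_filter_powersetCard_subset A univ r (subset_univ A) (hS A hA ▸ hkr.le),
            card_univ, Fintype.card_fin, hS A hA]
      _ = _ := by rw [sum_const, smul_eq_mul]
  have hpairs : ∑ t ∈ univ.powersetCard r, (#{A ∈ S | A ⊆ t}).choose 2
      ≤ (#S).choose 2 * (n - (k + 1)).choose (r - (k + 1)) := by
    rw [sum_choose_card_filter, ← card_powersetCard 2 S, ← smul_eq_mul, ← sum_const]
    refine sum_le_sum fun p hp => ?_
    obtain ⟨hpS, hp2⟩ := mem_powersetCard.1 hp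
    obtain ⟨e, he, f, hf, hef⟩ := one_lt_card.1 (by omega : 1 < #p)
    have hsup : k + 1 ≤ #(e ∪ f) := add_one_le_card_union (hS e (hpS he)) (hS f (hpS hf)) hef
    refine (card_le_card (t := {t ∈ univ.powersetCard r | e ∪ f ⊆ t}) fun t ht => ?_).trans ?_
    · simp only [mem_filter] at ht ⊢
      exact ⟨ht.1, union_subset (ht.2 e he) (ht.2 f hf)⟩
    · simpa using card_filter_powersetCard_superset_le hsup hkr
  rw [upperShadow_eq_filter, ← hdeg]
  exact (sum_le_card_filter_ne_zero_add_sum_choose_two _ _).trans (by gcongr)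

/-- **Lemma 7(iii) of the paper (from Kühn–Osthus).**  If `S′ ⊆ [n]^{(2)}` and
`|S′| ≤ n − 1`, then
`|δ_2^+(S′)| ≥ |S′|·C(n−|S′|−1, 2) + C(|S′|, 2)·(n−|S′|−1)`. -/
theorem upper_shadow_bound_two (n : ℕ) (S' : Finset (Finset (Fin n)))
    (hsub : ∀ A ∈ S', A.card = 2) (hcard : S'.card ≤ n - 1) :
    S'.card * Nat.choose (n - S'.card - 1) 2 + Nat.choose S'.card 2 * (n - S'.card - 1)
      ≤ (upperShadow n 4 S').card := by
  have hshadow := card_mul_choose_le_card_upperShadow_add hsub (by norm_num : 2 < 4)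
  rw [Nat.mul_choose_sub_two_two_eq hcard, show n - (2 + 1) = n - 3 by omega] at hshadow
  simp only [Nat.reduceAdd, Nat.reduceSub, Nat.choose_one_right] at hshadow
  omega
end

section
/- Let n ≥ 10 and let g_1, …, g_m be subsets of [n] = {1, …, n} with m ≤ n, such that |g_j| ≥ n−4 for every j ∈ {1, …, m} and every element of [n] belongs to at least m−6 of the sets g_1, …, g_m. Then (g_1, …, g_m) has a system of distinct representatives, i.e., there exist pairwise distinct elements x_1, …, x_m of [n] with x_j ∈ g_j for every j. -/
/-! Hall's marriage theorem. A nonempty family of at most `n - 4` indices is served by any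
single one of its sets. A larger family has more than `6` indices, so every element lies in
one of its sets (it misses at most `6` sets in all), and the union is all of `[n]`, which has
at least `m` elements. -/

open Finset

section

variable {ι α : Type*} [Fintype ι] [Fintype α] [DecidableEq α] {g : ι → Finset α}

theorem Finset.biUnion_eq_univ_of_card_filter_mem_ge {k : ℕ}
    (hcover : ∀ x, Fintype.card ι - k ≤ #{j | x ∈ g j}) {s : Finset ι} (hs : k < #s) :
    s.biUnion g = univ := by
  classical
  refine eq_univ_of_forall fun x => ?_
  by_contra hx
  have hdisj : Disjoint s ({j | x ∈ g j} : Finset ι) := disjoint_left.mpr fun j hjs hj =>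
    hx <| mem_biUnion.mpr ⟨j, hjs, (mem_filter.mp hj).2⟩
  have hunion := card_le_univ (s ∪ ({j | x ∈ g j} : Finset ι))
  rw [card_union_of_disjoint hdisj] at hunion
  have hx_many := hcover x
  omega

theorem exists_injective_mem_of_card_ge_of_card_filter_mem_ge {d k : ℕ} (hkd : k ≤ d)
    (hια : Fintype.card ι ≤ Fintype.card α) (hcard : ∀ j, d ≤ #(g j))
    (hcover : ∀ x, Fintype.card ι - k ≤ #{j | x ∈ g j}) :
    ∃ f : ι → α, Function.Injective f ∧ ∀ j, f j ∈ g j := by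
  rw [← all_card_le_biUnion_card_iff_exists_injective]
  intro s
  obtain hs | ⟨j, hj⟩ := s.eq_empty_or_nonempty
  · simp [hs]
  by_cases hsd : #s ≤ d
  · exact hsd.trans <| (hcard j).trans <| card_le_card <| subset_biUnion_of_mem g hj
  · rw [biUnion_eq_univ_of_card_filter_mem_ge hcover (by omega), card_univ]
    exact (card_le_univ s).trans hια

end

/-- **SDR lemma (from the proof of Case 2 of Theorem 5 of the paper).**
Let `n ≥ 10`, `m ≤ n`, and let `g_1, …, g_m ⊆ [n]` be sets with `|g_j| ≥ n − 4` for
every `j`, such that every element of `[n]` belongs to at least `m − 6` of the sets.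
Then `(g_1, …, g_m)` has a system of distinct representatives. -/
theorem sdr_exists (n m : ℕ) (hn : 10 ≤ n) (hm : m ≤ n)
    (g : Fin m → Finset (Fin n))
    (hcard : ∀ j, n - 4 ≤ (g j).card)
    (hcover : ∀ x : Fin n, m - 6 ≤ (Finset.univ.filter fun j => x ∈ g j).card) :
    ∃ x : Fin m → Fin n, Function.Injective x ∧ ∀ j, x j ∈ g j :=
  exists_injective_mem_of_card_ge_of_card_filter_mem_ge (k := 6) (by omega)
    (by simpa using hm) hcard (by simpa using hcover)
end

section
/- Let μ ≥ 1 and n ≥ 10 be integers and set k = n−2. Let C = (m_1, …, m_s) and P = (n_1, …, n_t) be lists of integers with 2 ≤ m_i ≤ n for every i ∈ {1, …, s}, 1 ≤ n_j ≤ n−1 for every j ∈ {1, …, t}, and m_1 + ⋯ + m_s + n_1 + ⋯ + n_t = μ·C(n, n−2). Then μK_n^{(n−2)} has a decomposition into s Berge cycles of lengths m_1, …, m_s and t Berge paths of lengths n_1, …, n_t. -/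
/-!
Taking complements identifies the edges of `K_n^{(n-2)}` with the pairs of vertices. List the
pairs round by round along a round-robin (near-)one-factorization of `K_n`, each round consisting
of `n / 2` disjoint pairs; repeat the list `μ` times and cut it into consecutive blocks of lengths
`m_1, …, m_s, n_1, …, n_t`. A block becomes a Berge cycle or path as soon as consecutive edges
are linked by distinct vertices, the vertex linking two edges avoiding both complementary pairs.
Hall's theorem provides them: every linking slot admits at least `n - 4` vertices, and a block of
at most `n` positions meets at most three rounds, so each vertex is excluded from at most six
slots; when `n ≥ 10` this is at most `n - 4`, and then every set of slots has enough candidates.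
-/

/-- The data `(v, e)` forms a Berge cycle of length `len` in `μ K_n^{(k)}` (edges of the
multi-hypergraph are pairs: a `k`-subset of `Fin n` together with a copy index in `Fin μ`):
the vertices `v 0, …, v (len-1)` are distinct, the edges `e 0, …, e (len-1)` are distinct
`k`-sets (with multiplicity), and `e j` contains `v j` and `v ((j+1) mod len)`. -/
def IsBergeCycle (n k μ len : ℕ) (v : ℕ → Fin n) (e : ℕ → Finset (Fin n) × Fin μ) : Prop :=
  Set.InjOn v (Set.Iio len) ∧ Set.InjOn e (Set.Iio len) ∧
  ∀ j < len, (e j).1.card = k ∧ v j ∈ (e j).1 ∧ v ((j + 1) % len) ∈ (e j).1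

/-- The data `(v, e)` forms a Berge path of length `len` in `μ K_n^{(k)}`:
the vertices `v 0, …, v len` are distinct, the edges `e 0, …, e (len-1)` are distinct
`k`-sets (with multiplicity), and `e j` contains `v j` and `v (j+1)`. -/
def IsBergePath (n k μ len : ℕ) (v : ℕ → Fin n) (e : ℕ → Finset (Fin n) × Fin μ) : Prop :=
  Set.InjOn v (Set.Iic len) ∧ Set.InjOn e (Set.Iio len) ∧
  ∀ j < len, (e j).1.card = k ∧ v j ∈ (e j).1 ∧ v (j + 1) ∈ (e j).1

open Finset

section Transversal

variable {ι κ α : Type*} [Fintype ι] [Fintype α] [DecidableEq α]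

theorem exists_injective_forall_mem_of_card_add_le [Fintype κ] (T : κ → Finset α) (d : ℕ)
    (hκ : Fintype.card κ ≤ Fintype.card α) (hT : ∀ k, Fintype.card α ≤ #(T k) + d)
    (hmiss : ∀ y, #{k | y ∉ T k} + d ≤ Fintype.card α) :
    ∃ f : κ → α, Function.Injective f ∧ ∀ k, f k ∈ T k := by
  classical
  refine (all_card_le_biUnion_card_iff_exists_injective T).mp fun S => ?_
  by_cases hS : #S + d ≤ Fintype.card α
  · obtain rfl | ⟨k, hk⟩ := S.eq_empty_or_nonempty
    · simp
    · calc #S ≤ #(T k) := by have := hT k; omega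
        _ ≤ #(S.biUnion T) := card_le_card (subset_biUnion_of_mem T hk)
  · suffices S.biUnion T = univ by
      rw [this, card_univ]
      exact (card_le_univ S).trans hκ
    -- fewer than `#S` of the sets `T k` miss any given `y`
    refine eq_univ_of_forall fun y => ?_
    by_contra hy
    have hsub : S ⊆ ({k | y ∉ T k} : Finset κ) :=
      fun k hk => mem_filter.mpr ⟨mem_univ _, fun h => hy (mem_biUnion.mpr ⟨k, hk, h⟩)⟩
    have := card_le_card hsub
    have := hmiss y
    omega

variable [DecidableEq κ]

def incidentInter (src tgt : ι ↪ κ) (E : ι → Finset α) (k : κ) : Finset α :=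
  {y | ∀ i, (src i = k ∨ tgt i = k) → y ∈ E i}

theorem card_incidentInter_add_four (src tgt : ι ↪ κ) {E : ι → Finset α}
    (hE : ∀ i, Fintype.card α ≤ #(E i) + 2) (k : κ) :
    Fintype.card α ≤ #(incidentInter src tgt E k) + 4 := by
  classical
  have hfiber : ∀ e : ι ↪ κ, #({i | e i = k} : Finset ι) ≤ 1 := fun e =>
    card_le_one.mpr fun i hi j hj =>
      e.injective ((mem_filter.mp hi).2.trans (mem_filter.mp hj).2.symm)
  have hinc : #({i | src i = k ∨ tgt i = k} : Finset ι) ≤ 2 := by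
    rw [filter_or]
    have := card_union_le ({i | src i = k} : Finset ι) {i | tgt i = k}
    have := hfiber src
    have := hfiber tgt
    omega
  have hcompl : (incidentInter src tgt E k)ᶜ ⊆
      ({i | src i = k ∨ tgt i = k} : Finset ι).biUnion fun i => (E i)ᶜ := by
    intro y hy
    simp only [incidentInter, mem_compl, mem_filter, mem_univ, true_and, not_forall] at hy
    obtain ⟨i, hi, hyi⟩ := hy
    exact mem_biUnion.mpr ⟨i, mem_filter.mpr ⟨mem_univ _, hi⟩, mem_compl.mpr hyi⟩
  have := (card_le_card hcompl).trans
    (card_biUnion_le_card_mul _ _ 2 fun i _ => by rw [card_compl]; have := hE i; omega)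
  rw [card_compl] at this
  omega

theorem card_filter_notMem_incidentInter_le [Fintype κ] (src tgt : ι ↪ κ)
    (E : ι → Finset α) (y : α) :
    #{k | y ∉ incidentInter src tgt E k} ≤ 2 * #{i | y ∉ E i} := by
  have hsub : ({k | y ∉ incidentInter src tgt E k} : Finset κ) ⊆
      ({i | y ∉ E i} : Finset ι).map src ∪ ({i | y ∉ E i} : Finset ι).map tgt := by
    intro k hk
    simp only [incidentInter, mem_filter, mem_univ, true_and, not_forall] at hk
    obtain ⟨i, hi | hi, hyi⟩ := hk <;>
      simp only [mem_union, mem_map, mem_filter, mem_univ, true_and]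
    · exact Or.inl ⟨i, hyi, hi⟩
    · exact Or.inr ⟨i, hyi, hi⟩
  have := (card_le_card hsub).trans (card_union_le _ _)
  rw [card_map, card_map] at this
  omega

theorem exists_injective_endpoints_mem [Fintype κ] (src tgt : ι ↪ κ) (E : ι → Finset α)
    (hκ : Fintype.card κ ≤ Fintype.card α) (hα : 10 ≤ Fintype.card α)
    (hE : ∀ i, Fintype.card α ≤ #(E i) + 2) (hsparse : ∀ y, #{i | y ∉ E i} ≤ 3) :
    ∃ f : κ → α, Function.Injective f ∧ ∀ i, f (src i) ∈ E i ∧ f (tgt i) ∈ E i := by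
  obtain ⟨f, hf, hfT⟩ := exists_injective_forall_mem_of_card_add_le (incidentInter src tgt E) 4
    hκ (card_incidentInter_add_four src tgt hE) fun y => by
      have := card_filter_notMem_incidentInter_le src tgt E y
      have := hsparse y
      omega
  exact ⟨f, hf, fun i => ⟨(mem_filter.mp (hfT (src i))).2 i (Or.inl rfl),
    (mem_filter.mp (hfT (tgt i))).2 i (Or.inr rfl)⟩⟩

end Transversal

section Threading

theorem val_finRotate {m : ℕ} (i : Fin m) : (finRotate m i : ℕ) = (i + 1) % m := by
  obtain _ | m := m
  · exact i.elim0
  · rw [finRotate_apply, Fin.val_add, Fin.val_one', Nat.add_mod_mod]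

variable {n μ len : ℕ} {e : ℕ → Finset (Fin n) × Fin μ}

theorem exists_isBergeCycle (hn : 10 ≤ n) (hlen : len ≤ n) (he : Set.InjOn e (Set.Iio len))
    (hcard : ∀ j < len, #(e j).1 = n - 2)
    (hsparse : ∀ y, #{i : Fin len | y ∉ (e i).1} ≤ 3) :
    ∃ v, IsBergeCycle n (n - 2) μ len v e := by
  obtain ⟨f, hf, hfe⟩ := exists_injective_endpoints_mem (Function.Embedding.refl _)
    (finRotate len).toEmbedding (fun i : Fin len => (e i).1) (by simpa using hlen)
    (by simpa using hn) (fun i => by simp only [Fintype.card_fin, hcard i i.2]; omega) hsparse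
  refine ⟨fun j => if h : j < len then f ⟨j, h⟩ else ⟨0, by omega⟩, ?_, he,
    fun j hj => ⟨hcard j hj, by simpa [hj] using (hfe ⟨j, hj⟩).1, ?_⟩⟩
  · intro a (ha : a < len) b (hb : b < len) hab
    simp only [dif_pos ha, dif_pos hb] at hab
    exact congrArg Fin.val (hf hab)
  · have hlt : (j + 1) % len < len := Nat.mod_lt _ (by omega)
    simp only [dif_pos hlt]
    convert (hfe ⟨j, hj⟩).2 using 2
    simp only [Fin.ext_iff, Equiv.coe_toEmbedding, val_finRotate]

theorem exists_isBergePath (hn : 10 ≤ n) (hlen : len + 1 ≤ n) (he : Set.InjOn e (Set.Iio len))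
    (hcard : ∀ j < len, #(e j).1 = n - 2)
    (hsparse : ∀ y, #{i : Fin len | y ∉ (e i).1} ≤ 3) :
    ∃ v, IsBergePath n (n - 2) μ len v e := by
  obtain ⟨f, hf, hfe⟩ := exists_injective_endpoints_mem Fin.castSuccEmb (Fin.succEmb len)
    (fun i : Fin len => (e i).1) (by simpa using hlen)
    (by simpa using hn) (fun i => by simp only [Fintype.card_fin, hcard i i.2]; omega) hsparse
  refine ⟨fun j => if h : j < len + 1 then f ⟨j, h⟩ else ⟨0, by omega⟩, ?_, he,
    fun j hj => ⟨hcard j hj, ?_, ?_⟩⟩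
  · intro a (ha : a ≤ len) b (hb : b ≤ len) hab
    simp only [dif_pos (Nat.lt_succ_of_le ha), dif_pos (Nat.lt_succ_of_le hb)] at hab
    exact congrArg Fin.val (hf hab)
  · simpa [show j < len + 1 by omega] using (hfe ⟨j, hj⟩).1
  · simpa [hj] using (hfe ⟨j, hj⟩).2

end Threading

theorem card_filter_fin_add_le_of_injOn_div {ρ k L : ℕ} (b : ℕ) {P : ℕ → Prop}
    [DecidablePred P] (hρ : 0 < ρ) (hL : L ≤ k * ρ + 1) (hP : Set.InjOn (· / ρ) {g | P g}) :
    #{i : Fin L | P (b + i)} ≤ k + 1 := by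
  have hlo : ∀ i : Fin L, b / ρ ≤ (b + i) / ρ := fun i => Nat.div_le_div_right (by omega)
  have hhi : ∀ i : Fin L, (b + i) / ρ ≤ b / ρ + k := fun i =>
    calc (b + i) / ρ ≤ (b + k * ρ) / ρ := Nat.div_le_div_right (by omega)
      _ = b / ρ + k := Nat.add_mul_div_right _ _ hρ
  rw [← card_range (k + 1)]
  refine card_le_card_of_injOn (fun i => (b + i) / ρ - b / ρ) (fun i _ => ?_)
    fun i hi j hj hij => ?_
  · simpa using (by have := hhi i; omega : (b + i) / ρ - b / ρ < k + 1)
  · simp only [coe_filter, mem_univ, true_and, Set.mem_ofPred_eq] at hi hj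
    have := hP hi hj (by have := hlo i; have := hlo j; simp only at hij ⊢; omega)
    exact Fin.ext (by omega)

theorem card_filter_val_notMem {n : ℕ} (P : Finset ℕ) (hP : ∀ x ∈ P, x < n) :
    #{y : Fin n | ↑y ∉ P} = n - #P := by
  rw [filter_not, card_sdiff_of_subset (filter_subset _ _), card_univ, Fintype.card_fin,
    ← card_attachFin P hP]
  congr 2
  ext
  simp [mem_attachFin]

theorem subset_of_filter_val_notMem_subset {n : ℕ} {P Q : Finset ℕ} (hP : ∀ x ∈ P, x < n)
    (h : ({y | ↑y ∉ Q} : Finset (Fin n)) ⊆ ({y | ↑y ∉ P} : Finset (Fin n))) :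
    P ⊆ Q := by
  intro x hx
  by_contra hxQ
  simpa [hx] using h (mem_filter.mpr ⟨mem_univ ⟨x, hP x hx⟩, hxQ⟩)

section RoundRobin

variable {n r r' s s' x : ℕ}

def numRounds (n : ℕ) : ℕ := 2 * ((n - 1) / 2) + 1

/-- Round `r` of the round-robin schedule on `ℤ / M`, `M = numRounds n` (`n` or `n - 1`, odd):
slot `s < (M - 1) / 2` holds `{r + (s + 1), r - (s + 1)} mod M`, and for even `n` the last slot
holds `{r, n - 1}`. -/
def roundPair (n r s : ℕ) : Finset ℕ :=
  if s < (n - 1) / 2 then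
    {if r + s + 1 < numRounds n then r + s + 1 else r + s + 1 - numRounds n,
      if s < r then r - s - 1 else r + numRounds n - s - 1}
  else {r, n - 1}

theorem mem_roundPair (hr : r < numRounds n) :
    x ∈ roundPair n r s ↔
      (s < (n - 1) / 2 ∧ x < numRounds n ∧ (x = r + s + 1 ∨ x + numRounds n = r + s + 1 ∨
        x + s + 1 = r ∨ x + s + 1 = r + numRounds n)) ∨
      ((n - 1) / 2 ≤ s ∧ (x = r ∨ x = n - 1)) := by
  unfold roundPair numRounds at *
  split_ifs <;> simp only [mem_insert, mem_singleton] <;> omega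

theorem lt_of_mem_roundPair (hr : r < numRounds n) (hs : s < n / 2) (hx : x ∈ roundPair n r s) :
    x < n := by
  rw [mem_roundPair hr] at hx
  unfold numRounds at *
  omega

theorem card_roundPair (hr : r < numRounds n) (hs : s < n / 2) : #(roundPair n r s) = 2 := by
  unfold roundPair numRounds at *
  split_ifs <;> rw [card_pair] <;> omega

theorem eq_of_mem_roundPair (hr : r < numRounds n) (hs : s < n / 2) (hs' : s' < n / 2)
    (hx : x ∈ roundPair n r s) (hx' : x ∈ roundPair n r s') : s = s' := by
  rw [mem_roundPair hr] at hx hx'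
  unfold numRounds at *
  omega

theorem eq_of_roundPair_eq (hr : r < numRounds n) (hr' : r' < numRounds n) (hs : s < n / 2)
    (hs' : s' < n / 2) (h : roundPair n r s = roundPair n r' s') : r = r' ∧ s = s' := by
  replace h := congrArg (fun t : Finset ℕ => (t : Set ℕ)) h
  unfold roundPair at h
  unfold numRounds at *
  split_ifs at h <;> push_cast at h <;> rw [Set.pair_eq_pair_iff] at h <;> omega

theorem numRounds_mul_half (n : ℕ) : numRounds n * (n / 2) = n.choose 2 := by
  rw [Nat.choose_two_right]
  refine (Nat.div_eq_of_eq_mul_left two_pos ?_).symm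
  obtain ⟨q, rfl | rfl⟩ := Nat.even_or_odd' n
  · obtain _ | q := q
    · rfl
    · rw [show numRounds (2 * (q + 1)) = 2 * q + 1 by unfold numRounds; omega,
        show 2 * (q + 1) / 2 = q + 1 by omega, show 2 * (q + 1) - 1 = 2 * q + 1 by omega]
      ring
  · rw [show numRounds (2 * q + 1) = 2 * q + 1 by unfold numRounds; omega,
      show (2 * q + 1) / 2 = q by omega, show 2 * q + 1 - 1 = 2 * q by omega]
    ring

end RoundRobin

section PairSequence

def pairSeq (n g : ℕ) : Finset ℕ := roundPair n (g / (n / 2) % numRounds n) (g % (n / 2))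

variable {n g g' x : ℕ}

theorem lt_of_mem_pairSeq (hn : 2 ≤ n) (hx : x ∈ pairSeq n g) : x < n :=
  lt_of_mem_roundPair (Nat.mod_lt _ (by simp [numRounds])) (Nat.mod_lt _ (by omega)) hx

theorem card_pairSeq (hn : 2 ≤ n) : #(pairSeq n g) = 2 :=
  card_roundPair (Nat.mod_lt _ (by simp [numRounds])) (Nat.mod_lt _ (by omega))

theorem pairSeq_mod_choose (n g : ℕ) : pairSeq n (g % n.choose 2) = pairSeq n g := by
  rw [pairSeq, pairSeq, ← numRounds_mul_half, mul_comm, Nat.mod_mul_right_div_self, Nat.mod_mod,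
    Nat.mod_mul_right_mod]

theorem injOn_pairSeq (hn : 2 ≤ n) : Set.InjOn (pairSeq n) (Set.Iio (n.choose 2)) := by
  intro g hg g' hg' h
  rw [Set.mem_Iio, ← numRounds_mul_half] at hg hg'
  have hρ : 0 < n / 2 := by omega
  obtain ⟨hr, hs⟩ := eq_of_roundPair_eq (Nat.mod_lt _ (by simp [numRounds]))
    (Nat.mod_lt _ (by simp [numRounds])) (Nat.mod_lt _ hρ) (Nat.mod_lt _ hρ) h
  rw [Nat.mod_eq_of_lt (Nat.div_lt_of_lt_mul (by linarith)),
    Nat.mod_eq_of_lt (Nat.div_lt_of_lt_mul (by linarith))] at hr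
  rw [← Nat.div_add_mod g (n / 2), ← Nat.div_add_mod g' (n / 2), hr, hs]

theorem injOn_div_setOf_mem_pairSeq (hn : 2 ≤ n) (x : ℕ) :
    Set.InjOn (· / (n / 2)) {g | x ∈ pairSeq n g} := by
  intro g hg g' hg' h
  simp only [Set.mem_ofPred_eq, pairSeq] at hg hg' h
  rw [h] at hg
  have := eq_of_mem_roundPair (Nat.mod_lt _ (by simp [numRounds])) (Nat.mod_lt _ (by omega))
    (Nat.mod_lt _ (by omega)) hg hg'
  rw [← Nat.div_add_mod g (n / 2), ← Nat.div_add_mod g' (n / 2), h, this]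

end PairSequence

section Tokens

def edgeSeq (n g : ℕ) : Finset (Fin n) := {y | ↑y ∉ pairSeq n g}

def token (n μ : ℕ) [NeZero μ] (g : ℕ) : Finset (Fin n) × Fin μ :=
  (edgeSeq n g, Fin.ofNat μ (g / n.choose 2))

variable {n μ : ℕ} [NeZero μ]

theorem card_edgeSeq (hn : 2 ≤ n) (g : ℕ) : #(edgeSeq n g) = n - 2 := by
  rw [edgeSeq, card_filter_val_notMem _ fun _ => lt_of_mem_pairSeq hn, card_pairSeq hn]

theorem card_filter_notMem_edgeSeq_le (hn : 2 ≤ n) {L : ℕ} (hL : L ≤ n) (b : ℕ)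
    (y : Fin n) :
    #{i : Fin L | y ∉ edgeSeq n (b + i)} ≤ 3 := by
  simpa [edgeSeq] using card_filter_fin_add_le_of_injOn_div (k := 2) b (by omega : 0 < n / 2)
    (by omega) (injOn_div_setOf_mem_pairSeq hn y)

theorem injOn_token (hn : 2 ≤ n) : Set.InjOn (token n μ) (Set.Iio (μ * n.choose 2)) := by
  intro g hg g' hg' h
  simp only [token, Prod.mk.injEq, Fin.ext_iff, Fin.val_ofNat] at h
  have hC : 0 < n.choose 2 := Nat.choose_pos hn
  have hpair : pairSeq n g = pairSeq n g' :=
    (subset_of_filter_val_notMem_subset (fun _ => lt_of_mem_pairSeq hn) h.1.ge).antisymm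
      (subset_of_filter_val_notMem_subset (fun _ => lt_of_mem_pairSeq hn) h.1.le)
  rw [← pairSeq_mod_choose n g, ← pairSeq_mod_choose n g'] at hpair
  have hmod := injOn_pairSeq hn (Nat.mod_lt g hC) (Nat.mod_lt g' hC) hpair
  have hdiv : g / n.choose 2 = g' / n.choose 2 := by
    have hq : ∀ g ∈ Set.Iio (μ * n.choose 2), g / n.choose 2 < μ :=
      fun g hg => Nat.div_lt_of_lt_mul (by rw [mul_comm]; exact hg)
    simpa only [Nat.mod_eq_of_lt (hq g hg), Nat.mod_eq_of_lt (hq g' hg')] using h.2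
  rw [← Nat.div_add_mod g (n.choose 2), ← Nat.div_add_mod g' (n.choose 2), hdiv, hmod]

theorem exists_token_eq (hn : 2 ≤ n) {A : Finset (Fin n)} (hA : #A = n - 2) (c : Fin μ) :
    ∃ g < μ * n.choose 2, token n μ g = (A, c) := by
  obtain ⟨g, hg, h⟩ := surj_on_of_inj_on_of_card_le (s := range (μ * n.choose 2))
    (t := powersetCard (n - 2) univ ×ˢ univ) (fun g _ => token n μ g)
    (fun g _ => mem_product.mpr
      ⟨mem_powersetCard.mpr ⟨subset_univ _, card_edgeSeq hn g⟩, mem_univ _⟩)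
    (fun g g' hg hg' h => injOn_token hn (by simpa using hg) (by simpa using hg') h)
    (by simp [Nat.choose_symm (by omega : 2 ≤ n), mul_comm]) (A, c)
    (mem_product.mpr ⟨mem_powersetCard.mpr ⟨subset_univ _, hA⟩, mem_univ _⟩)
  exact ⟨g, mem_range.mp hg, h.symm⟩

theorem injOn_token_add (hn : 2 ≤ n) {b len : ℕ} (h : ∀ q < len, b + q < μ * n.choose 2) :
    Set.InjOn (fun q => token n μ (b + q)) (Set.Iio len) :=
  (injOn_token hn).comp (add_right_injective b).injOn h

theorem existsUnique_token_comp_eq {X : Type*} (hn : 2 ≤ n) (pos : X ≃ Fin (μ * n.choose 2))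
    {A : Finset (Fin n)} (hA : #A = n - 2) (c : Fin μ) : ∃! x, token n μ (pos x) = (A, c) := by
  obtain ⟨g, hg, hgA⟩ := exists_token_eq hn hA c
  exact Function.Injective.existsUnique_of_mem_range
    (fun x y h => pos.injective (Fin.ext (injOn_token hn (pos x).2 (pos y).2 h)))
    ⟨pos.symm ⟨g, hg⟩, by simpa using hgA⟩

end Tokens

theorem exists_concat_blocks {s t N : ℕ} (m : Fin s → ℕ) (p : Fin t → ℕ)
    (hN : ∑ i, m i + ∑ j, p j = N) :
    ∃ (pos : (Σ i : Fin s, Fin (m i)) ⊕ (Σ j : Fin t, Fin (p j)) ≃ Fin N)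
      (startC : Fin s → ℕ) (startP : Fin t → ℕ),
      (∀ i q, (pos (.inl ⟨i, q⟩) : ℕ) = startC i + q) ∧
      (∀ j q, (pos (.inr ⟨j, q⟩) : ℕ) = startP j + q) :=
  ⟨((finSigmaFinEquiv.sumCongr finSigmaFinEquiv).trans finSumFinEquiv).trans (finCongr hN),
    fun i => ∑ k : Fin i, m (Fin.castLE i.2.le k),
    fun j => ∑ i, m i + ∑ k : Fin j, p (Fin.castLE j.2.le k),
    fun i q => by simp, fun j q => by simp [add_assoc]⟩

/-- **Case `k = n−2` of Theorem 5 of the paper.**  For `μ ≥ 1`, `n ≥ 10` and lists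
`C = (m_1, …, m_s)`, `P = (n_1, …, n_t)` with `2 ≤ m_i ≤ n`, `1 ≤ n_j ≤ n−1` and
`Σ m_i + Σ n_j = μ·C(n, n−2)`, the multi-hypergraph `μ K_n^{(n-2)}` decomposes into
`s` Berge cycles of lengths `m_1, …, m_s` and `t` Berge paths of lengths `n_1, …, n_t`. -/
theorem complete_multihypergraph_berge_decomposition_k_eq_n_sub_two (μ n : ℕ) (hμ : 1 ≤ μ)
    (hn : 10 ≤ n)
    (s t : ℕ) (m : Fin s → ℕ) (p : Fin t → ℕ)
    (hm : ∀ i, 2 ≤ m i ∧ m i ≤ n) (hp : ∀ j, 1 ≤ p j ∧ p j ≤ n - 1)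
    (hsum : ∑ i, m i + ∑ j, p j = μ * Nat.choose n (n - 2)) :
    ∃ (vc : Fin s → ℕ → Fin n) (ec : Fin s → ℕ → Finset (Fin n) × Fin μ)
      (vp : Fin t → ℕ → Fin n) (ep : Fin t → ℕ → Finset (Fin n) × Fin μ),
      (∀ i, IsBergeCycle n (n - 2) μ (m i) (vc i) (ec i)) ∧
      (∀ j, IsBergePath n (n - 2) μ (p j) (vp j) (ep j)) ∧
      (∀ A : Finset (Fin n), A.card = n - 2 → ∀ c : Fin μ,
        ∃! x : (Σ i : Fin s, Fin (m i)) ⊕ (Σ j : Fin t, Fin (p j)),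
          Sum.elim (fun q : Σ i : Fin s, Fin (m i) => ec q.1 q.2.val)
                   (fun q : Σ j : Fin t, Fin (p j) => ep q.1 q.2.val) x = (A, c)) := by
  have hn2 : 2 ≤ n := by omega
  have : NeZero μ := ⟨by omega⟩
  obtain ⟨pos, startC, startP, hC, hP⟩ :=
    exists_concat_blocks m p (hsum.trans (by rw [Nat.choose_symm hn2]))
  choose vc hvc using fun i => exists_isBergeCycle (e := fun q => token n μ (startC i + q)) hn
    (hm i).2 (injOn_token_add hn2 fun q hq => hC i ⟨q, hq⟩ ▸ (pos _).2)
    (fun _ _ => card_edgeSeq hn2 _) (card_filter_notMem_edgeSeq_le hn2 (hm i).2 _)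
  have hpn : ∀ j, p j + 1 ≤ n := fun j => by have := (hp j).2; omega
  choose vp hvp using fun j => exists_isBergePath (e := fun q => token n μ (startP j + q)) hn
    (hpn j) (injOn_token_add hn2 fun q hq => hP j ⟨q, hq⟩ ▸ (pos _).2)
    (fun _ _ => card_edgeSeq hn2 _)
    (card_filter_notMem_edgeSeq_le hn2 (Nat.le_of_succ_le (hpn j)) _)
  refine ⟨vc, fun i q => token n μ (startC i + q), vp, fun j q => token n μ (startP j + q),
    hvc, hvp, fun A hA c => ?_⟩
  convert existsUnique_token_comp_eq hn2 pos hA c using 3 with x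
  rcases x with ⟨i, q⟩ | ⟨j, q⟩ <;> simp [hC, hP]
end

section
/- Let μ ≥ 1 and n ≥ 4 be integers and set k = n−1. Let C = (m_1, …, m_s) and P = (n_1, …, n_t) be lists of integers with 2 ≤ m_i ≤ n for every i ∈ {1, …, s}, 1 ≤ n_j ≤ n−1 for every j ∈ {1, …, t}, and m_1 + ⋯ + m_s + n_1 + ⋯ + n_t = μ·n. Then μK_n^{(n−1)} has a decomposition into s Berge cycles of lengths m_1, …, m_s and t Berge paths of lengths n_1, …, n_t. -/
open Finset

theorem Finset.exists_eq_compl_singleton_of_card_eq {α : Type*} [Fintype α] [DecidableEq α]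
    [Nonempty α] {A : Finset α} (hA : #A = Fintype.card α - 1) : ∃ x, A = {x}ᶜ := by
  have hpos := Fintype.card_pos (α := α)
  obtain ⟨x, hx⟩ := card_eq_one.mp (show #Aᶜ = 1 by rw [card_compl]; omega)
  exact ⟨x, by rw [← hx, compl_compl]⟩

namespace Fin

open Fin.CommRing

variable {n : ℕ} [NeZero n]

theorem natCast_injOn_Iio : Set.InjOn (Nat.cast : ℕ → Fin n) (Set.Iio n) := fun i hi j hj h => by
  simpa [Nat.mod_eq_of_lt hi, Nat.mod_eq_of_lt hj] using congrArg Fin.val h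

theorem add_natCast_ne_add_natCast (a : Fin n) {i j : ℕ} (hi : i < n) (hj : j < n)
    (hij : i ≠ j) : a + i ≠ a + j := fun h =>
  hij (natCast_injOn_Iio hi hj (add_left_cancel h))

theorem add_natCast_ne_self (a : Fin n) {i : ℕ} (hi0 : 0 < i) (hi : i < n) : a + i ≠ a := by
  simpa using add_natCast_ne_add_natCast a hi (NeZero.pos n) hi0.ne'

end Fin

section BergeFromMissingVertices

open Fin.CommRing

variable {n μ : ℕ} [NeZero n] {e : ℕ → Finset (Fin n) × Fin μ}

/-- The shift `d` for the cycle vertices `a + j + d`: `d = 2` for `m = 2` keeps the closing vertex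
`a + d` out of the missing vertex `a + m - 1` of the last edge. -/
def cycleShift (m : ℕ) : ℕ := if m = 2 then 2 else 1

theorem isBergeCycle_of_fst_eq_compl {m : ℕ} (hn : 4 ≤ n) (hm : m ≤ n) (a : Fin n)
    (he : Set.InjOn e (Set.Iio m)) (hmiss : ∀ j < m, (e j).1 = {a + j}ᶜ) :
    IsBergeCycle n (n - 1) μ m (fun j => a + j + cycleShift m) e := by
  have hd : 0 < cycleShift m ∧ cycleShift m + 1 < n ∧ cycleShift m ≠ m - 1 := by
    unfold cycleShift; split_ifs <;> omega
  refine ⟨fun j₁ hj₁ j₂ hj₂ h => ?_, he, fun j hj => ?_⟩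
  · exact Fin.natCast_injOn_Iio (lt_of_lt_of_le hj₁ hm) (lt_of_lt_of_le hj₂ hm)
      (add_left_cancel (add_right_cancel h))
  simp only [hmiss j hj, card_compl, card_singleton, Fintype.card_fin, mem_compl,
    mem_singleton, true_and]
  refine ⟨Fin.add_natCast_ne_self _ hd.1 (by omega), ?_⟩
  rcases (show j + 1 < m ∨ j + 1 = m by omega) with hnext | hlast
  · have := Fin.add_natCast_ne_self (a + (j : Fin n)) (i := cycleShift m + 1) (by omega) hd.2.1
    rw [Nat.mod_eq_of_lt hnext]
    push_cast at this ⊢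
    convert this using 2
    ring
  · rw [hlast, Nat.mod_self, Nat.cast_zero, add_zero, show j = m - 1 by omega]
    exact Fin.add_natCast_ne_add_natCast a (by omega) (by omega) hd.2.2

theorem isBergePath_of_fst_eq_compl {p : ℕ} (hn : 3 ≤ n) (hp : p < n) (a : Fin n)
    (he : Set.InjOn e (Set.Iio p)) (hmiss : ∀ j < p, (e j).1 = {a + j}ᶜ) :
    IsBergePath n (n - 1) μ p (fun j => a + j + 1) e := by
  refine ⟨fun j₁ hj₁ j₂ hj₂ h => ?_, he, fun j hj => ?_⟩
  · exact Fin.natCast_injOn_Iio (lt_of_le_of_lt hj₁ hp) (lt_of_le_of_lt hj₂ hp)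
      (add_left_cancel (add_right_cancel h))
  simp only [hmiss j hj, card_compl, card_singleton, Fintype.card_fin, mem_compl,
    mem_singleton, true_and]
  constructor
  · simpa using Fin.add_natCast_ne_self (a + (j : Fin n)) (i := 1) one_pos (by omega)
  · have := Fin.add_natCast_ne_self (a + (j : Fin n)) (i := 2) two_pos (by omega)
    push_cast at this ⊢
    convert this using 2
    ring

end BergeFromMissingVertices

section Schedule

open Fin.CommRing

def slotEdge (n μ : ℕ) [NeZero n] [NeZero μ] (r : ℕ) : Finset (Fin n) × Fin μ :=
  ({(r : Fin n)}ᶜ, ((r / n : ℕ) : Fin μ))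

theorem slotEdge_bijOn (n μ : ℕ) [NeZero n] [NeZero μ] :
    Set.BijOn (slotEdge n μ) (Set.Iio (μ * n)) {e | #e.1 = n - 1} := by
  refine ⟨fun r _ => by simp [slotEdge, card_compl], fun r₁ hr₁ r₂ hr₂ h => ?_, ?_⟩
  · obtain ⟨hvertex, hcopy⟩ := Prod.ext_iff.mp h
    have hmod : r₁ % n = r₂ % n := by
      simpa using congrArg Fin.val (singleton_injective (compl_injective hvertex))
    have hdiv : r₁ / n = r₂ / n := by
      have hlt (r : ℕ) (hr : r ∈ Set.Iio (μ * n)) : r / n < μ :=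
        Nat.div_lt_of_lt_mul (by rw [mul_comm]; exact hr)
      simpa [slotEdge, Nat.mod_eq_of_lt (hlt _ hr₁), Nat.mod_eq_of_lt (hlt _ hr₂)] using
        congrArg Fin.val hcopy
    rw [← Nat.div_add_mod r₁ n, ← Nat.div_add_mod r₂ n, hmod, hdiv]
  · rintro ⟨A, c⟩ hA
    obtain ⟨x, rfl⟩ := exists_eq_compl_singleton_of_card_eq (A := A) (by simpa using hA)
    have hc : ((x : ℕ) + n * c) / n = c := by
      rw [Nat.add_mul_div_left _ _ (NeZero.pos n), Nat.div_eq_of_lt x.2, zero_add]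
    refine ⟨finProdFinEquiv (c, x), (finProdFinEquiv (c, x)).2, ?_⟩
    simp [slotEdge, finProdFinEquiv, hc]

end Schedule

theorem existsUnique_comp_eq_of_bijOn {X β : Type*} {N : ℕ} (σ : X ≃ Fin N) {g : ℕ → β}
    {T : Set β} (hg : Set.BijOn g (Set.Iio N) T) {b : β} (hb : b ∈ T) :
    ∃! x, g (σ x) = b := by
  obtain ⟨r, hr, rfl⟩ := hg.surjOn hb
  refine ⟨σ.symm ⟨r, hr⟩, by simp, fun x hx => σ.eq_symm_apply.mpr (Fin.ext ?_)⟩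
  exact hg.injOn (σ x).2 hr hx

section Concatenation

variable {s t : ℕ} (m : Fin s → ℕ) (p : Fin t → ℕ)

def blockStart (i : Fin s) : ℕ := ∑ k : Fin i, m (Fin.castLE i.2.le k)

theorem blockStart_add_lt {i : Fin s} {j : ℕ} (hj : j < m i) : blockStart m i + j < ∑ i, m i := by
  simpa [blockStart, finSigmaFinEquiv_apply] using (finSigmaFinEquiv ⟨i, ⟨j, hj⟩⟩).2

def concatIndex : (Σ i, Fin (m i)) ⊕ (Σ j, Fin (p j)) ≃ Fin (∑ i, m i + ∑ j, p j) :=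
  (Equiv.sumCongr finSigmaFinEquiv finSigmaFinEquiv).trans finSumFinEquiv

theorem concatIndex_inl (q : Σ i, Fin (m i)) :
    (concatIndex m p (.inl q) : ℕ) = blockStart m q.1 + q.2 := by
  simp [concatIndex, blockStart, finSigmaFinEquiv_apply]

theorem concatIndex_inr (q : Σ j, Fin (p j)) :
    (concatIndex m p (.inr q) : ℕ) = ∑ i, m i + blockStart p q.1 + q.2 := by
  simp [concatIndex, blockStart, finSigmaFinEquiv_apply, add_assoc]

end Concatenation

/-- **Case `k = n−1` of Theorem 5 of the paper.**  For `μ ≥ 1`, `n ≥ 4` and lists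
`C = (m_1, …, m_s)`, `P = (n_1, …, n_t)` with `2 ≤ m_i ≤ n`, `1 ≤ n_j ≤ n−1` and
`Σ m_i + Σ n_j = μ·n`, the multi-hypergraph `μ K_n^{(n-1)}` decomposes into
`s` Berge cycles of lengths `m_1, …, m_s` and `t` Berge paths of lengths `n_1, …, n_t`. -/
theorem complete_multihypergraph_berge_decomposition_k_eq_n_sub_one (μ n : ℕ) (hμ : 1 ≤ μ)
    (hn : 4 ≤ n)
    (s t : ℕ) (m : Fin s → ℕ) (p : Fin t → ℕ)
    (hm : ∀ i, 2 ≤ m i ∧ m i ≤ n) (hp : ∀ j, 1 ≤ p j ∧ p j ≤ n - 1)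
    (hsum : ∑ i, m i + ∑ j, p j = μ * n) :
    ∃ (vc : Fin s → ℕ → Fin n) (ec : Fin s → ℕ → Finset (Fin n) × Fin μ)
      (vp : Fin t → ℕ → Fin n) (ep : Fin t → ℕ → Finset (Fin n) × Fin μ),
      (∀ i, IsBergeCycle n (n - 1) μ (m i) (vc i) (ec i)) ∧
      (∀ j, IsBergePath n (n - 1) μ (p j) (vp j) (ep j)) ∧
      (∀ A : Finset (Fin n), A.card = n - 1 → ∀ c : Fin μ,
        ∃! x : (Σ i : Fin s, Fin (m i)) ⊕ (Σ j : Fin t, Fin (p j)),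
          Sum.elim (fun q : Σ i : Fin s, Fin (m i) => ec q.1 q.2.val)
                   (fun q : Σ j : Fin t, Fin (p j) => ep q.1 q.2.val) x = (A, c)) := by
  have : NeZero n := ⟨by omega⟩
  have : NeZero μ := ⟨by omega⟩
  have hcycle_lt (i : Fin s) (j : ℕ) (hj : j < m i) : blockStart m i + j < μ * n := by
    have := blockStart_add_lt m hj; omega
  have hpath_lt (i : Fin t) (j : ℕ) (hj : j < p i) :
      ∑ i, m i + blockStart p i + j < μ * n := by
    have := blockStart_add_lt p hj; omega
  have hslot := slotEdge_bijOn n μ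
  open Fin.CommRing in
  refine ⟨fun i j => (blockStart m i : Fin n) + j + cycleShift (m i),
    fun i j => slotEdge n μ (blockStart m i + j),
    fun i j => ((∑ i, m i + blockStart p i : ℕ) : Fin n) + j + 1,
    fun i j => slotEdge n μ (∑ i, m i + blockStart p i + j), fun i => ?_, fun i => ?_, ?_⟩
  · refine isBergeCycle_of_fst_eq_compl hn (hm i).2 _ (fun j₁ hj₁ j₂ hj₂ h => ?_)
      fun j _ => by simp only [slotEdge, Nat.cast_add]
    exact Nat.add_left_cancel (hslot.injOn (hcycle_lt i j₁ hj₁) (hcycle_lt i j₂ hj₂) h)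
  · refine isBergePath_of_fst_eq_compl (by omega) (by have := hp i; omega) _
      (fun j₁ hj₁ j₂ hj₂ h => ?_) fun j _ => by simp only [slotEdge, Nat.cast_add]
    exact Nat.add_left_cancel (hslot.injOn (hpath_lt i j₁ hj₁) (hpath_lt i j₂ hj₂) h)
  · intro A hA c
    have hconcat (x) : Sum.elim (fun q : Σ i, Fin (m i) => slotEdge n μ (blockStart m q.1 + q.2))
        (fun q : Σ i, Fin (p i) => slotEdge n μ (∑ i, m i + blockStart p q.1 + q.2)) x =
        slotEdge n μ (concatIndex m p x) := by
      rcases x with q | q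
      · rw [concatIndex_inl]; rfl
      · rw [concatIndex_inr]; rfl
    simp only [hconcat]
    exact existsUnique_comp_eq_of_bijOn (concatIndex m p) (hsum ▸ hslot) hA
end
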